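/- arXiv:1007.2989 — 9 statements merged into one kernel-verified Lean document; each statement's English description precedes it below -/
import Mathlib

section
/- Every t-controlled bad sequence over ℕ^k has finite length, and there is a maximum length Bad_{k,f}(t) among all t-controlled bad sequences. -/
/-- The infinity norm of a tuple in ℕ^k: the maximum coordinate. -/
def normInf {k : ℕ} (x : Fin k → ℕ) : ℕ := Finset.univ.sup x

/-- A finite sequence x₀,…,x_{n-1} over ℕ^k is t-controlled if ‖x_i‖_∞ < f(i+t). -/
def Controlled (f : ℕ → ℕ) (t : ℕ) {k n : ℕ} (x : Fin n → (Fin k → ℕ)) : Prop :=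
  ∀ i : Fin n, normInf (x i) < f (i + t)

/-- A sequence is bad if it has no increasing pair (for the product ordering). -/
def Bad {k n : ℕ} (x : Fin n → (Fin k → ℕ)) : Prop :=
  ¬ ∃ i j : Fin n, i < j ∧ x i ≤ x j

/-- Restriction preserves controlledness. -/
lemma Controlled.restrict {f : ℕ → ℕ} {t k n : ℕ} {x : Fin n → (Fin k → ℕ)}
    (hx : Controlled f t x) {m : ℕ} (h : m ≤ n) :
    Controlled f t (x ∘ Fin.castLE h) := by
  intro i
  simpa using hx (Fin.castLE h i)

/-- Restriction preserves badness. -/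
lemma Bad.restrict {k n : ℕ} {x : Fin n → (Fin k → ℕ)}
    (hx : Bad x) {m : ℕ} (h : m ≤ n) :
    Bad (x ∘ Fin.castLE h) := by
  rintro ⟨i, j, hij, hle⟩
  exact hx ⟨Fin.castLE h i, Fin.castLE h j, by simpa using hij, hle⟩

open CategoryTheory in
/-- The inverse system of controlled bad sequences. -/
def badSystem (f : ℕ → ℕ) (t k : ℕ) : ℕᵒᵖ ⥤ Type where
  obj n := {x : Fin n.unop → (Fin k → ℕ) // Controlled f t x ∧ Bad x}
  map {m n} h := TypeCat.ofHom fun x => ⟨x.val ∘ Fin.castLE (leOfHom h.unop),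
    x.prop.1.restrict _, x.prop.2.restrict _⟩
  map_id n := by
    refine ConcreteCategory.hom_ext _ _ fun x => ?_
    apply Subtype.ext
    funext i
    simp
  map_comp {a b c} g h := by
    refine ConcreteCategory.hom_ext _ _ fun x => ?_
    apply Subtype.ext
    funext i
    simp

/-- Finiteness of controlled bad sequences of a given length. -/
lemma badSystem_finite (f : ℕ → ℕ) (hmono : Monotone f) (t k n : ℕ) :
    Finite {x : Fin n → (Fin k → ℕ) // Controlled f t x ∧ Bad x} := by
  have : ∀ (x : {x : Fin n → (Fin k → ℕ) // Controlled f t x ∧ Bad x}) (i : Fin n) (j : Fin k),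
      x.val i j < f (n + t) := by
    intro x i j
    have h1 : x.val i j ≤ normInf (x.val i) := Finset.le_sup (Finset.mem_univ j)
    have h2 := x.prop.1 i
    have h3 : f ((i : ℕ) + t) ≤ f (n + t) := hmono (by omega)
    omega
  apply Finite.of_injective
    (fun x : {x : Fin n → (Fin k → ℕ) // Controlled f t x ∧ Bad x} =>
      (fun i j => (⟨x.val i j, this x i j⟩ : Fin (f (n + t))) : Fin n → Fin k → Fin (f (n + t))))
  intro x y hxy
  apply Subtype.ext
  funext i j
  exact congrArg Fin.val (congrFun (congrFun hxy i) j)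

/-- No infinite bad sequence exists (Dickson's lemma). -/
lemma no_infinite_bad (k : ℕ) (g : ℕ → (Fin k → ℕ)) :
    ∃ i j : ℕ, i < j ∧ g i ≤ g j := by
  have hpwo : WellQuasiOrdered (α := Fin k → ℕ) (· ≤ ·) := wellQuasiOrdered_le
  obtain ⟨i, j, hij, h⟩ := hpwo g
  exact ⟨i, j, hij, h⟩

open CategoryTheory in
/-- The lengths of controlled bad sequences are bounded. -/
lemma bad_length_bounded (f : ℕ → ℕ) (hmono : Monotone f) (k t : ℕ) :
    ∃ B : ℕ, ∀ (n : ℕ) (x : Fin n → (Fin k → ℕ)), Controlled f t x → Bad x → n ≤ B := by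
  by_contra hcon
  push_neg at hcon
  -- every length is achieved
  have hne : ∀ n : ℕ, Nonempty {x : Fin n → (Fin k → ℕ) // Controlled f t x ∧ Bad x} := by
    intro n
    obtain ⟨m, x, hc, hb, hnm⟩ := hcon n
    exact ⟨⟨x ∘ Fin.castLE hnm.le, hc.restrict _, hb.restrict _⟩⟩
  haveI : ∀ j : ℕᵒᵖ, Finite ((badSystem f t k).obj j) :=
    fun j => badSystem_finite f hmono t k j.unop
  haveI : ∀ j : ℕᵒᵖ, Nonempty ((badSystem f t k).obj j) := fun j => hne j.unop
  obtain ⟨u, hu⟩ := nonempty_sections_of_finite_inverse_system (badSystem f t k)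
  set g : ℕ → (Fin k → ℕ) := fun n => (u (Opposite.op (n + 1))).val ⟨n, Nat.lt_succ_self n⟩ with hg
  have hcompat : ∀ {m n : ℕ} (h : m ≤ n) (i : Fin m),
      (u (Opposite.op n)).val (Fin.castLE h i) = (u (Opposite.op m)).val i := by
    intro m n h i
    have := hu (f := (homOfLE h).op)
    rw [← this]
    rfl
  obtain ⟨i, j, hij, hle⟩ := no_infinite_bad k g
  have hgi : g i = (u (Opposite.op (j + 1))).val ⟨i, by exact Nat.lt_succ_of_lt hij⟩ := by
    have := hcompat (m := i + 1) (n := j + 1) (by omega) ⟨i, Nat.lt_succ_self i⟩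
    simpa [hg, Fin.castLE] using this.symm
  have hgj : g j = (u (Opposite.op (j + 1))).val ⟨j, Nat.lt_succ_self j⟩ := rfl
  exact (u (Opposite.op (j + 1))).prop.2
    ⟨⟨i, by exact Nat.lt_succ_of_lt hij⟩, ⟨j, Nat.lt_succ_self j⟩, by simpa using hij, by rw [← hgi, ← hgj]; exact hle⟩

/-- Every t-controlled bad sequence over ℕ^k has finite length, and there
is a maximum length among all t-controlled bad sequences. -/
theorem max_controlled_bad_length_exists
    (f : ℕ → ℕ) (hmono : Monotone f) (hf0 : 0 < f 0) (k t : ℕ) :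
    ∃ B : ℕ,
      (∀ (n : ℕ) (x : Fin n → (Fin k → ℕ)), Controlled f t x → Bad x → n ≤ B) ∧
      (∃ x : Fin B → (Fin k → ℕ), Controlled f t x ∧ Bad x) := by
  obtain ⟨B0, hB0⟩ := bad_length_bounded f hmono k t
  set S : Set ℕ := {n | ∃ x : Fin n → (Fin k → ℕ), Controlled f t x ∧ Bad x} with hS
  have h0 : 0 ∈ S := ⟨fun i => i.elim0, fun i => i.elim0, fun ⟨i, _, _, _⟩ => i.elim0⟩
  have hbdd : ∀ n ∈ S, n ≤ B0 := fun n ⟨x, hc, hb⟩ => hB0 n x hc hb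
  have hmem : sSup S ∈ S := Nat.sSup_mem ⟨0, h0⟩ ⟨B0, hbdd⟩
  refine ⟨sSup S, fun n x hc hb => le_csSup ⟨B0, hbdd⟩ ⟨x, hc, hb⟩, hmem⟩
end

section
/- For k ≥ 1, the maximal length of a t-controlled bad sequence over ℕ^k satisfies Bad_{k}(t) ≤ 1 + Bad_{τ'}(t+1), where τ' is the disjoint sum of N_k(t) := k·(f(t)−1) copies of ℕ^{k−1}. -/
/-- The sorted list of dimensions of a type (finite multiset of naturals). -/
def dims (τ : Multiset ℕ) : List ℕ := τ.sort (· ≤ ·)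

/-- ℕ^τ, the disjoint sum ∑_{k ∈ τ} ℕ^k. -/
def Carrier (τ : Multiset ℕ) : Type := Σ i : Fin (dims τ).length, Fin ((dims τ).get i) → ℕ

/-- The disjoint-sum-of-products ordering on ℕ^τ: comparable only within the
same summand, and there componentwise. -/
def CLe {τ : Multiset ℕ} (a b : Carrier τ) : Prop :=
  ∃ h : a.1 = b.1, ∀ j : Fin ((dims τ).get a.1), a.2 j ≤ b.2 (Fin.cast (by rw [h]) j)

/-- Infinity norm on ℕ^τ. -/
def cnorm {τ : Multiset ℕ} (a : Carrier τ) : ℕ := Finset.univ.sup a.2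

/-- A sequence over ℕ^τ is t-controlled if ‖x_i‖_∞ < f(i+t). -/
def Ctrl (f : ℕ → ℕ) (t : ℕ) {τ : Multiset ℕ} {n : ℕ} (x : Fin n → Carrier τ) : Prop :=
  ∀ i : Fin n, cnorm (x i) < f (i + t)

/-- A sequence is bad if it has no increasing pair. -/
def IsBad {τ : Multiset ℕ} {n : ℕ} (x : Fin n → Carrier τ) : Prop :=
  ¬ ∃ i j : Fin n, i < j ∧ CLe (x i) (x j)

/-- Bad_τ(t): the maximal length of a t-controlled bad sequence over ℕ^τ. -/
noncomputable def BadLen (f : ℕ → ℕ) (τ : Multiset ℕ) (t : ℕ) : ℕ :=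
  sSup {n | ∃ x : Fin n → Carrier τ, Ctrl f t x ∧ IsBad x}

/-! ### Auxiliary lemmas -/

section Aux

variable {τ : Multiset ℕ} {f : ℕ → ℕ} {t : ℕ}

/-- Truncating a controlled bad sequence gives a controlled bad sequence. -/
lemma truncate_aux {n m : ℕ} (h : m ≤ n) {x : Fin n → Carrier τ}
    (hc : Ctrl f t x) (hb : IsBad x) :
    Ctrl f t (x ∘ Fin.castLE h) ∧ IsBad (x ∘ Fin.castLE h) := by
  constructor
  · intro i
    exact hc (Fin.castLE h i)
  · rintro ⟨i, j, hij, hle⟩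
    exact hb ⟨Fin.castLE h i, Fin.castLE h j, hij, hle⟩

/-- Elements of bounded norm form a finite type. -/
lemma finite_norm (τ : Multiset ℕ) (M : ℕ) : Finite {a : Carrier τ // cnorm a < M} := by
  have hlt : ∀ (a : {a : Carrier τ // cnorm a < M}) (j : Fin ((dims τ).get a.1.1)),
      a.1.2 j < M := fun a j =>
    lt_of_le_of_lt (Finset.le_sup (Finset.mem_univ j)) a.2
  let F : {a : Carrier τ // cnorm a < M} →
      Σ i : Fin (dims τ).length, (Fin ((dims τ).get i) → Fin M) :=
    fun a => ⟨a.1.1, fun j => ⟨a.1.2 j, hlt a j⟩⟩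
  have hinj : Function.Injective F := by
    rintro ⟨⟨i, u⟩, hu⟩ ⟨⟨i', u'⟩, hu'⟩ h
    simp only [F, Sigma.mk.inj_iff] at h
    obtain ⟨rfl, h2⟩ := h
    have h2' := eq_of_heq h2
    have : u = u' := by
      funext j
      exact congrArg Fin.val (congrFun h2' j)
    subst this
    rfl
  exact Finite.of_injective F hinj

/-- ℕ^τ is a well-quasi-order: every infinite sequence has an increasing pair. -/
lemma pwo_carrier (τ : Multiset ℕ) (g : ℕ → Carrier τ) :
    ∃ i j : ℕ, i < j ∧ CLe (g i) (g j) := by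
  classical
  have main : ∀ s : Finset (Fin (dims τ).length),
      Set.PartiallyWellOrderedOn {a : Carrier τ | a.1 ∈ s} CLe := by
    intro s
    induction s using Finset.induction_on with
    | empty =>
      exact Set.PartiallyWellOrderedOn.mono (Set.partiallyWellOrderedOn_empty CLe) (by simp)
    | @insert i s hi ih =>
      have h1 : Set.PartiallyWellOrderedOn {a : Carrier τ | a.1 = i} CLe := by
        intro g'
        obtain ⟨g, hg, rfl⟩ : ∃ g : ℕ → Carrier τ, ∃ hg : ∀ n, g n ∈ {a : Carrier τ | a.1 = i},
            g' = fun n => ⟨g n, hg n⟩ := ⟨fun n => (g' n).1, fun n => (g' n).2, rfl⟩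
        have hP : (Set.univ : Set (Fin ((dims τ).get i) → ℕ)).IsPWO :=
          Set.isPWO_of_wellQuasiOrderedLE Set.univ
        obtain ⟨m, n, hmn, hle⟩ :=
          Set.PartiallyWellOrderedOn.exists_lt hP
            (f := fun n j => (g n).2 (Fin.cast (by rw [hg n]) j)) (fun _ => Set.mem_univ _)
        refine ⟨m, n, hmn, ?_⟩
        show CLe (g m) (g n)
        refine ⟨(hg m).trans (hg n).symm, ?_⟩
        intro j
        have h2 := hle (Fin.cast (by rw [hg m]) j)
        simp only at h2
        convert h2 using 2 <;> simp [Fin.ext_iff] <;> rfl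
      have hset : {a : Carrier τ | a.1 ∈ insert i s} =
          {a : Carrier τ | a.1 = i} ∪ {a : Carrier τ | a.1 ∈ s} := by
        ext a; simp [Finset.mem_insert]
      rw [hset]
      exact h1.union ih
  obtain ⟨m, n, hmn, hr⟩ := main Finset.univ (fun n => ⟨g n, by simp⟩)
  exact ⟨m, n, hmn, hr⟩

/-- "x extends to arbitrarily long controlled bad sequences". -/
def GoodExt (f : ℕ → ℕ) (t : ℕ) {τ : Multiset ℕ} {n : ℕ} (x : Fin n → Carrier τ) : Prop :=
  ∀ m, ∀ h : n ≤ m, ∃ y : Fin m → Carrier τ, Ctrl f t y ∧ IsBad y ∧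
    ∀ i : Fin n, y (Fin.castLE h i) = x i

lemma goodExt_zero (H : ∀ n, ∃ x : Fin n → Carrier τ, Ctrl f t x ∧ IsBad x) :
    GoodExt f t (fun i : Fin 0 => (i.elim0 : Carrier τ)) := by
  intro m _
  obtain ⟨y, hc, hb⟩ := H m
  exact ⟨y, hc, hb, fun i => i.elim0⟩

lemma goodExt_step {n : ℕ} {x : Fin n → Carrier τ} (hx : GoodExt f t x) :
    ∃ a : Carrier τ, GoodExt f t (Fin.snoc x a) := by
  classical
  choose y hcy hby hey using fun m : ℕ => hx (n + 1 + m) (by omega)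
  have hv : ∀ m, cnorm (y m ⟨n, by omega⟩) < f (n + t) := by
    intro m
    simpa using hcy m ⟨n, by omega⟩
  let v : ℕ → {a : Carrier τ // cnorm a < f (n + t)} := fun m => ⟨y m ⟨n, by omega⟩, hv m⟩
  have : Finite {a : Carrier τ // cnorm a < f (n + t)} := finite_norm τ _
  obtain ⟨a, ha⟩ := Finite.exists_infinite_fiber v
  have hinf : (v ⁻¹' {a}).Infinite := Set.infinite_coe_iff.1 ha
  refine ⟨a.1, ?_⟩
  intro m hm
  obtain ⟨m', hm'mem, hm'⟩ := hinf.exists_notMem_finset (Finset.range m)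
  have hmm' : m ≤ m' := by simpa using hm'
  have hle : m ≤ n + 1 + m' := by omega
  refine ⟨y m' ∘ Fin.castLE hle, (truncate_aux hle (hcy m') (hby m')).1,
    (truncate_aux hle (hcy m') (hby m')).2, ?_⟩
  intro i
  induction i using Fin.lastCases with
  | last =>
    have h1 : Fin.castLE hle (Fin.castLE hm (Fin.last n)) = (⟨n, by omega⟩ : Fin (n + 1 + m')) := by
      ext; simp
    simp only [Function.comp_apply, Fin.snoc_last, h1]
    have hmem : v m' = a := hm'mem
    simpa [v] using congrArg Subtype.val hmem
  | cast i =>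
    have h3 : Fin.castLE hle (Fin.castLE hm i.castSucc) =
        Fin.castLE (show n ≤ n + 1 + m' by omega) i := by
      ext; simp
    simp only [Function.comp_apply, Fin.snoc_castSucc, h3]
    exact hey m' i

/-- If arbitrarily long controlled bad sequences exist, we get a contradiction
with the well-quasi-order property. -/
lemma no_arbitrarily_long
    (H : ∀ n, ∃ x : Fin n → Carrier τ, Ctrl f t x ∧ IsBad x) : False := by
  classical
  let seq : ∀ n : ℕ, {p : Fin n → Carrier τ // GoodExt f t p} := fun n =>
    Nat.rec ⟨fun i => i.elim0, goodExt_zero H⟩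
      (fun n p => ⟨Fin.snoc p.1 (Classical.choose (goodExt_step p.2)),
        Classical.choose_spec (goodExt_step p.2)⟩) n
  have hseq : ∀ n, (seq (n + 1)).1 =
      Fin.snoc (seq n).1 (Classical.choose (goodExt_step (seq n).2)) := fun n => rfl
  let g : ℕ → Carrier τ := fun n => (seq (n + 1)).1 (Fin.last n)
  have coh : ∀ n (i : Fin n), (seq n).1 i = g i.1 := by
    intro n
    induction n with
    | zero => exact fun i => i.elim0
    | succ n ih =>
      intro i
      induction i using Fin.lastCases with
      | last => rfl
      | cast i =>
        rw [hseq n, Fin.snoc_castSucc]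
        simpa using ih i
  obtain ⟨i, j, hij, hle⟩ := pwo_carrier τ g
  obtain ⟨y, _, hby, hey⟩ := (seq (j + 1)).2 (j + 1) le_rfl
  apply hby
  have e : ∀ i' : Fin (j + 1), y i' = g i'.1 := by
    intro i'
    have h1 := hey i'
    rw [show Fin.castLE le_rfl i' = i' from Fin.ext rfl] at h1
    rw [h1]
    exact coh (j + 1) i'
  refine ⟨⟨i, by omega⟩, ⟨j, by omega⟩, by simp [Fin.lt_def]; omega, ?_⟩
  rw [e ⟨i, by omega⟩, e ⟨j, by omega⟩]
  exact hle

/-- The set of lengths of controlled bad sequences is bounded above. -/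
lemma bddAbove_badlen (f : ℕ → ℕ) (τ : Multiset ℕ) (t : ℕ) :
    BddAbove {n | ∃ x : Fin n → Carrier τ, Ctrl f t x ∧ IsBad x} := by
  by_contra hb
  rw [not_bddAbove_iff] at hb
  refine no_arbitrarily_long (f := f) (t := t) (τ := τ) ?_
  intro n
  obtain ⟨n', ⟨x, hc, hbad⟩, hn⟩ := hb n
  exact ⟨x ∘ Fin.castLE hn.le, (truncate_aux hn.le hc hbad).1, (truncate_aux hn.le hc hbad).2⟩

lemma dims_replicate (N K : ℕ) : dims (Multiset.replicate N K) = List.replicate N K := by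
  have h1 : (↑(dims (Multiset.replicate N K)) : Multiset ℕ) = Multiset.replicate N K :=
    Multiset.sort_eq _ _
  obtain ⟨hcard, hmem⟩ := Multiset.eq_replicate.1 h1
  refine List.eq_replicate_iff.2 ⟨?_, ?_⟩
  · simpa using hcard
  · intro b hb
    exact hmem b (by simpa using hb)

lemma get_dims_replicate (N K : ℕ) (p : Fin (dims (Multiset.replicate N K)).length) :
    (dims (Multiset.replicate N K)).get p = K := by
  simp [List.get_eq_getElem, dims_replicate]

lemma length_dims_replicate (N K : ℕ) : (dims (Multiset.replicate N K)).length = N := by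
  rw [dims_replicate, List.length_replicate]

end Aux

/-- For k ≥ 1, Bad_{k}(t) ≤ 1 + Bad_{τ'}(t+1) where τ' is the disjoint sum of
N_k(t) = k·(f(t)−1) copies of ℕ^{k−1}. -/
theorem badLen_single_le (f : ℕ → ℕ) (hmono : Monotone f) (hf0 : 0 < f 0)
    (k t : ℕ) (hk : 1 ≤ k) :
    BadLen f {k} t ≤ 1 + BadLen f (Multiset.replicate (k * (f t - 1)) (k - 1)) (t + 1) := by
  classical
  obtain ⟨K, rfl⟩ : ∃ K, k = K + 1 := ⟨k - 1, by omega⟩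
  set q := f t - 1 with hqdef
  set N := (K + 1) * q with hNdef
  set τ' := Multiset.replicate N K with hτ'
  have hKsub : (K + 1 : ℕ) - 1 = K := by omega
  rw [hKsub]
  -- dims computations for the singleton type
  have hd1 : dims ({K + 1} : Multiset ℕ) = [K + 1] := Multiset.sort_singleton _ _
  have hlen1 : (dims ({K + 1} : Multiset ℕ)).length = 1 := by rw [hd1]; rfl
  have hgetk : ∀ p : Fin (dims ({K + 1} : Multiset ℕ)).length,
      (dims ({K + 1} : Multiset ℕ)).get p = K + 1 := by
    intro p
    simp [List.get_eq_getElem, hd1]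
  apply csSup_le'
  rintro n ⟨x, hcx, hbx⟩
  rcases n with _ | m
  · exact Nat.zero_le _
  -- the coordinate view of x
  set u : Fin (m + 1) → Fin (K + 1) → ℕ :=
    fun i j => (x i).2 (Fin.cast (hgetk (x i).1).symm j) with hu
  have hub : ∀ (i : Fin (m + 1)) (j : Fin (K + 1)), u i j ≤ cnorm (x i) := by
    intro i j
    simp only [hu]
    exact Finset.le_sup (Finset.mem_univ _)
  -- badness in terms of u
  have hbadu : ∀ i i' : Fin (m + 1), i < i' → ¬ ∀ j, u i j ≤ u i' j := by
    intro i i' hii' hall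
    apply hbx
    refine ⟨i, i', hii', ?_⟩
    have hfst : (x i).1 = (x i').1 := by
      have h1 : ((x i).1 : ℕ) < 1 := by have := (x i).1.2; omega
      have h2 : ((x i').1 : ℕ) < 1 := by have := (x i').1.2; omega
      exact Fin.ext (by omega)
    refine ⟨hfst, ?_⟩
    intro j
    have h2 := hall (Fin.cast (hgetk (x i).1) j)
    simp only [hu] at h2
    convert h2 using 2 <;> exact Fin.ext (by simp)
  -- x 0 is small
  have hx0 : ∀ j, u 0 j < f t := by
    intro j
    have h1 := hcx 0
    have h2 : ((0 : Fin (m + 1)) : ℕ) + t = t := by simp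
    rw [h2] at h1
    exact lt_of_le_of_lt (hub 0 j) h1
  -- choose witnessing coordinates
  have hwit : ∀ i : Fin m, ∃ j : Fin (K + 1), u i.succ j < u 0 j := by
    intro i
    have h := hbadu 0 i.succ (Fin.succ_pos i)
    push_neg at h
    obtain ⟨j, hj⟩ := h
    exact ⟨j, by omega⟩
  choose J hJ using hwit
  set v : Fin m → ℕ := fun i => u i.succ (J i) with hv
  have hvq : ∀ i, v i < q := by
    intro i
    have h1 := hJ i
    have h2 := hx0 (J i)
    simp only [hv, hqdef]
    omega
  -- if q = 0 then m = 0
  by_cases hq0 : q = 0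
  · rcases Nat.eq_zero_or_pos m with rfl | hm
    · simpa using Nat.le_add_right 1 _
    · have := hvq ⟨0, hm⟩
      omega
  have hqpos : 0 < q := Nat.pos_of_ne_zero hq0
  -- encoding of summand indices
  set c : Fin m → ℕ := fun i => (J i : ℕ) * q + v i with hc
  have hcN : ∀ i, c i < N := by
    intro i
    have h1 : (J i : ℕ) * q + v i < ((J i : ℕ) + 1) * q := by
      rw [Nat.succ_mul]
      have := hvq i
      omega
    have h2 : ((J i : ℕ) + 1) * q ≤ (K + 1) * q :=
      Nat.mul_le_mul_right q (J i).2
    exact lt_of_lt_of_le h1 h2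
  have hcinj : ∀ i i' : Fin m, c i = c i' → J i = J i' ∧ v i = v i' := by
    intro i i' h
    have hdiv : ∀ i : Fin m, c i / q = (J i : ℕ) := by
      intro i
      simp only [hc]
      rw [add_comm, Nat.add_mul_div_right _ _ hqpos, Nat.div_eq_of_lt (hvq i)]
      omega
    have hmod : ∀ i : Fin m, c i % q = v i := by
      intro i
      simp only [hc]
      rw [add_comm, Nat.add_mul_mod_self_right, Nat.mod_eq_of_lt (hvq i)]
    constructor
    · have := hdiv i
      rw [h] at this
      rw [hdiv i'] at this
      exact Fin.ext this.symm
    · have := hmod i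
      rw [h, hmod i'] at this
      exact this.symm
    -- dims computations for τ'
  have hlenN : (dims τ').length = N := length_dims_replicate N K
  have hgetK : ∀ p : Fin (dims τ').length, (dims τ').get p = K := get_dims_replicate N K
  -- build the sequence over τ'
  set p : Fin m → Fin (dims τ').length := fun i => ⟨c i, by rw [hlenN]; exact hcN i⟩ with hp
  set y : Fin m → Carrier τ' :=
    fun i => ⟨p i, fun j => u i.succ ((J i).succAbove (Fin.cast (hgetK (p i)) j))⟩ with hy
  have hcy : Ctrl f (t + 1) y := by
    intro i
    have hpos : 0 < f ((i : ℕ) + (t + 1)) := lt_of_lt_of_le hf0 (hmono (Nat.zero_le _))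
    rw [cnorm, Finset.sup_lt_iff hpos]
    intro j _
    have h1 : u i.succ ((J i).succAbove (Fin.cast (hgetK (p i)) j)) ≤ cnorm (x i.succ) :=
      hub i.succ _
    have h2 := hcx i.succ
    have h3 : ((i.succ : Fin (m + 1)) : ℕ) + t = (i : ℕ) + (t + 1) := by
      simp only [Fin.val_succ]; omega
    rw [h3] at h2
    exact lt_of_le_of_lt h1 h2
  have hby : IsBad y := by
    rintro ⟨i, i', hii', h1, h2⟩
    have hcc : c i = c i' := congrArg Fin.val h1
    obtain ⟨hJJ, hvv⟩ := hcinj i i' hcc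
    refine hbadu i.succ i'.succ (Fin.succ_lt_succ_iff.2 hii') ?_
    intro j
    by_cases hj : j = J i
    · subst hj
      have : u i.succ (J i) = u i'.succ (J i) := by
        have := hvv
        simp only [hv] at this
        rw [this, hJJ]
      exact le_of_eq this
    · obtain ⟨z, hz⟩ := Fin.exists_succAbove_eq hj
      have hpp : p i = p i' := h1
      have h3 := h2 (Fin.cast (hgetK (p i)).symm z)
      dsimp only [y] at h3
      have e1 : (J i).succAbove (Fin.cast (hgetK (p i)) (Fin.cast (hgetK (p i)).symm z)) = j := by
        rw [show Fin.cast (hgetK (p i)) (Fin.cast (hgetK (p i)).symm z) = z from Fin.ext (by simp)]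
        exact hz
      have e2 : (J i').succAbove
          (Fin.cast (hgetK (p i'))
            (Fin.cast (by rw [hpp]) (Fin.cast (hgetK (p i)).symm z))) = j := by
        rw [show Fin.cast (hgetK (p i')) (Fin.cast (by rw [hpp] : (dims τ').get (p i) = (dims τ').get (p i')) (Fin.cast (hgetK (p i)).symm z)) = z from Fin.ext (by simp), ← hJJ]
        exact hz
      rw [e1, e2] at h3
      exact h3
  have hmem : m ∈ {n | ∃ x : Fin n → Carrier τ', Ctrl f (t + 1) x ∧ IsBad x} := ⟨y, hcy, hby⟩
  have hle := le_csSup (bddAbove_badlen f τ' (t + 1)) hmem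
  have e1 : BadLen f τ' (t + 1) = sSup {n | ∃ x : Fin n → Carrier τ', Ctrl f (t + 1) x ∧ IsBad x} := rfl
  have e2 : BadLen f (Multiset.replicate N K) (t + 1) = BadLen f τ' (t + 1) := rfl
  omega
end

section
/- For any type τ ≠ ∅, Bad_τ(t) ≤ max over k ∈ τ of (1 + Bad_{τ⟨k,t⟩}(t+1)), where τ⟨k,t⟩ := (τ − {k}) + N_k(t)×{k−1} and N_k(t) = k·(f(t)−1); and Bad_∅(t) = 0. -/
/-- τ⟨k,t⟩ := (τ − {k}) + N_k(t) × {k−1}, where N_k(t) = k·(f(t)−1).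
(For k = 0 this is simply τ − {0}.) -/
def tkt (f : ℕ → ℕ) (τ : Multiset ℕ) (k t : ℕ) : Multiset ℕ :=
  τ.erase k + Multiset.replicate (k * (f t - 1)) (k - 1)

-- ### helpers

def BadSet (f : ℕ → ℕ) (τ : Multiset ℕ) (t : ℕ) : Set ℕ :=
  {n | ∃ x : Fin n → Carrier τ, Ctrl f t x ∧ IsBad x}

lemma badLen_eq (f : ℕ → ℕ) (τ : Multiset ℕ) (t : ℕ) : BadLen f τ t = sSup (BadSet f τ t) := rfl

lemma zero_mem_badSet (f : ℕ → ℕ) (τ : Multiset ℕ) (t : ℕ) : 0 ∈ BadSet f τ t :=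
  ⟨fun i => i.elim0, fun i => i.elim0, fun ⟨i, _⟩ => i.elim0⟩

lemma cle_iff {τ : Multiset ℕ} (a b : Carrier τ) :
    CLe a b ↔ (a.1 : ℕ) = (b.1 : ℕ) ∧
      ∀ (p : ℕ) (hp : p < (dims τ).get a.1) (hq : p < (dims τ).get b.1),
        a.2 ⟨p, hp⟩ ≤ b.2 ⟨p, hq⟩ := by
  constructor
  · rintro ⟨h, H⟩
    exact ⟨by rw [h], fun p hp hq => H ⟨p, hp⟩⟩
  · rintro ⟨h, H⟩
    have h' : a.1 = b.1 := Fin.ext h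
    refine ⟨h', fun j => ?_⟩
    exact H j.val j.isLt (by rw [← h']; exact j.isLt)

lemma cnorm_component {τ : Multiset ℕ} (a : Carrier τ) (j : Fin ((dims τ).get a.1)) :
    a.2 j ≤ cnorm a := Finset.le_sup (Finset.mem_univ j)

lemma cnorm_le {τ : Multiset ℕ} (a : Carrier τ) (B : ℕ)
    (h : ∀ j, a.2 j ≤ B) : cnorm a ≤ B := Finset.sup_le fun j _ => h j

-- skip function
def skipf (c p : ℕ) : ℕ := if p < c then p else p + 1

lemma skipf_lt {c p k : ℕ} (hc : c < k) (hp : p < k - 1) : skipf c p < k := by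
  unfold skipf; split <;> omega

lemma skipf_ne (c p : ℕ) : skipf c p ≠ c := by unfold skipf; split <;> omega

lemma skipf_inj {c p q : ℕ} (h : skipf c p = skipf c q) : p = q := by
  unfold skipf at h; split at h <;> split at h <;> omega

lemma skipf_surj {c p k : ℕ} (hc : c < k) (hp : p < k) (hne : p ≠ c) :
    ∃ q, q < k - 1 ∧ skipf c q = p := by
  refine ⟨if p < c then p else p - 1, ?_, ?_⟩
  · split <;> omega
  · by_cases h : p < c <;> simp only [h, if_true, if_false, skipf] <;> split <;> omega

lemma pair_inj {D c v c' v' : ℕ} (hv : v < D) (hv' : v' < D)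
    (h : c * D + v = c' * D + v') : c = c' ∧ v = v' := by
  rcases lt_trichotomy c c' with hlt | heq | hgt
  · exfalso
    have : (c + 1) * D ≤ c' * D := Nat.mul_le_mul_right D hlt
    nlinarith
  · subst heq; omega
  · exfalso
    have : (c' + 1) * D ≤ c * D := Nat.mul_le_mul_right D hgt
    nlinarith

-- injection from multiset inclusion
lemma exists_get_inj : ∀ (l₁ l₂ : List ℕ), (l₁ : Multiset ℕ) ≤ (l₂ : Multiset ℕ) →
    ∃ g : Fin l₁.length → Fin l₂.length, Function.Injective g ∧
      ∀ i : Fin l₁.length, l₂.get (g i) = l₁.get i := by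
  intro l₁
  induction l₁ with
  | nil => exact fun l₂ _ => ⟨fun i => i.elim0, fun i => i.elim0, fun i => i.elim0⟩
  | cons a l₁ ih =>
    intro l₂ h
    have ha : a ∈ l₂ := by
      have : a ∈ (l₂ : Multiset ℕ) := Multiset.mem_of_le h (by simp)
      simpa using this
    obtain ⟨m, hm⟩ := List.mem_iff_get.mp ha
    have hlen : (l₂.eraseIdx m.val).length + 1 = l₂.length :=
      List.length_eraseIdx_add_one m.isLt
    have hper : (l₂.erase a : Multiset ℕ) = ↑(l₂.eraseIdx m.val) := by
      refine Quot.sound ?_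
      have := List.erase_getElem (l := l₂) (i := m.val) m.isLt
      exact (show List.Perm _ _ by simpa [← hm, List.get_eq_getElem] using this)
    have hle : (l₁ : Multiset ℕ) ≤ ↑(l₂.eraseIdx m.val) := by
      rw [← hper, ← Multiset.coe_erase]
      have := Multiset.erase_le_erase (s := (↑(a :: l₁) : Multiset ℕ)) a h
      simpa using this
    obtain ⟨g', hginj, hgget⟩ := ih _ hle
    -- embedding of eraseIdx indices into l₂ indices, skipping m
    have hemb : ∀ i : Fin (l₂.eraseIdx m.val).length,
        ∃ j : Fin l₂.length, j ≠ m ∧ l₂.get j = (l₂.eraseIdx m.val).get i ∧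
          j.val = skipf m.val i.val := by
      intro i
      by_cases hi : i.val < m.val
      · refine ⟨⟨i.val, by omega⟩, ?_, ?_, by simp [skipf, hi]⟩
        · intro hc; apply absurd (congrArg Fin.val hc); simp; omega
        · simp only [List.get_eq_getElem]
          exact (List.getElem_eraseIdx_of_lt (l := l₂) (i := m.val) (j := i.val) i.isLt hi).symm
      · refine ⟨⟨i.val + 1, by omega⟩, ?_, ?_, by simp [skipf, hi]⟩
        · intro hc; apply absurd (congrArg Fin.val hc); simp; omega
        · simp only [List.get_eq_getElem]
          exact (List.getElem_eraseIdx_of_ge (l := l₂) (i := m.val) (j := i.val) i.isLt (by omega)).symm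
    choose emb hembne hembget hembval using hemb
    refine ⟨fun i => Fin.cases m (fun i' => emb (g' i')) i, ?_, ?_⟩
    · intro i j hij
      induction i using Fin.cases with
      | zero =>
        induction j using Fin.cases with
        | zero => rfl
        | succ j' =>
          simp only [Fin.cases_zero, Fin.cases_succ] at hij
          exact absurd hij.symm (hembne _)
      | succ i' =>
        induction j using Fin.cases with
        | zero =>
          simp only [Fin.cases_zero, Fin.cases_succ] at hij
          exact absurd hij (hembne _)
        | succ j' =>
          simp only [Fin.cases_succ] at hij
          have := congrArg Fin.val hij
          rw [hembval, hembval] at this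
          have hg : g' i' = g' j' := Fin.ext (skipf_inj this)
          rw [hginj hg]
    · intro i
      induction i using Fin.cases with
      | zero => simpa [List.get_eq_getElem] using hm
      | succ i' =>
        simp only [Fin.cases_succ, List.get_eq_getElem] at hembget hgget ⊢
        rw [hembget, hgget]
        simp [Fin.val_succ]

-- ### Dershowitz-Manna style single-replacement relation on multisets of ℕ
def DMStep (τ' τ : Multiset ℕ) : Prop :=
  ∃ a s, a ∈ τ ∧ (∀ b ∈ s, b < a) ∧ τ' = τ.erase a + s

lemma acc_dm_zero : Acc DMStep (0 : Multiset ℕ) := by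
  constructor
  rintro N ⟨c, s, hc, -, -⟩
  exact absurd hc (Multiset.notMem_zero c)

lemma acc_dm_add (a : ℕ)
    (iha : ∀ b < a, ∀ M : Multiset ℕ, Acc DMStep M → Acc DMStep (b ::ₘ M)) :
    ∀ s : Multiset ℕ, (∀ b ∈ s, b < a) → ∀ M : Multiset ℕ,
      Acc DMStep M → Acc DMStep (M + s) := by
  intro s
  induction s using Multiset.induction with
  | empty => intro _ M hM; simpa using hM
  | cons b s ihs =>
    intro hbs M hM
    have h1 : Acc DMStep (M + s) := ihs (fun c hc => hbs c (by simp [hc])) M hM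
    have h2 : Acc DMStep (b ::ₘ (M + s)) := iha b (hbs b (by simp)) _ h1
    have : M + (b ::ₘ s) = b ::ₘ (M + s) := by
      rw [Multiset.add_cons]
    rwa [this]

lemma acc_dm_cons : ∀ a : ℕ, ∀ M : Multiset ℕ, Acc DMStep M → Acc DMStep (a ::ₘ M) := by
  intro a
  induction a using Nat.strong_induction_on with
  | _ a iha =>
    intro M hM
    induction hM with
    | intro M hM ihM =>
      constructor
      rintro N ⟨c, s, hc, hs, rfl⟩
      by_cases hca : c = a
      · subst hca
        rw [Multiset.erase_cons_head]
        exact acc_dm_add c iha s hs M ⟨M, hM⟩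
      · have hcM : c ∈ M := by
          rcases Multiset.mem_cons.mp hc with h | h
          · exact absurd h hca
          · exact h
        rw [Multiset.erase_cons_tail_of_mem hcM, Multiset.cons_add]
        exact ihM _ ⟨c, s, hcM, hs, rfl⟩

lemma dm_wf : WellFounded DMStep := by
  constructor
  intro M
  induction M using Multiset.induction with
  | empty => exact acc_dm_zero
  | cons a s ih => exact acc_dm_cons a s ih

lemma step_lemma (f : ℕ → ℕ) (hmono : Monotone f) (hf0 : 0 < f 0) (τ : Multiset ℕ) (t n : ℕ)
    (x : Fin (n+1) → Carrier τ) (hc : Ctrl f t x) (hb : IsBad x) :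
    ∃ k, k ∈ τ ∧ n ∈ BadSet f (tkt f τ k t) (t+1) := by
  classical
  set L : List ℕ := dims τ with hLdef
  set i₀ : Fin L.length := (x 0).1 with hi₀def
  set k : ℕ := L.get i₀ with hkdef
  have hkmem : k ∈ τ := by
    have : k ∈ L := List.get_mem L i₀
    rwa [hLdef, dims, Multiset.mem_sort] at this
  refine ⟨k, hkmem, ?_⟩
  have hft : 1 ≤ f t := le_trans hf0 (hmono (Nat.zero_le t))
  set D : ℕ := f t - 1 with hDdef
  set N : ℕ := k * D with hNdef
  set τ' : Multiset ℕ := tkt f τ k t with hτ'def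
  set L' : List ℕ := dims τ' with hL'def
  set E : List ℕ := L.eraseIdx i₀.val with hEdef
  have hElen : E.length + 1 = L.length := List.length_eraseIdx_add_one i₀.isLt
  set T : List ℕ := E ++ List.replicate N (k-1) with hTdef
  have hTlen : T.length = E.length + N := by
    rw [hTdef, List.length_append, List.length_replicate]
  have hEunfold : (L.eraseIdx (i₀ : ℕ)).length = E.length := rfl
  have hTunfold : (E ++ List.replicate N (k-1)).length = T.length := rfl
  -- multiset equality
  have hcoeE : (E : Multiset ℕ) = τ.erase k := by
    have hperm := List.erase_getElem (l := L) (i := i₀.val) i₀.isLt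
    have h1 : (L.erase L[i₀.val] : Multiset ℕ) = ↑E := Quot.sound hperm
    have h2 : L[i₀.val] = k := by rw [hkdef]; simp [List.get_eq_getElem]
    rw [← h1, h2, ← Multiset.coe_erase]
    congr 1
    rw [hLdef, dims, Multiset.sort_eq]
  have hcoeT : (T : Multiset ℕ) = τ' := by
    rw [hTdef]
    rw [← Multiset.coe_add, hcoeE, Multiset.coe_replicate, hτ'def, tkt, hNdef, hDdef]
  have hTle : (T : Multiset ℕ) ≤ (L' : Multiset ℕ) := by
    rw [hcoeT, hL'def, dims, Multiset.sort_eq]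
  obtain ⟨g, hginj, hgget⟩ := exists_get_inj T L' hTle
  -- left encoder
  have hgEex : ∀ j : Fin L.length, j ≠ i₀ → ∃ e : Fin L'.length,
      L'.get e = L.get j ∧ ∃ m : Fin T.length, e = g m ∧
        m.val = (if j.val < i₀.val then j.val else j.val - 1) ∧ m.val < E.length := by
    intro j hj
    have hjv : j.val ≠ i₀.val := fun h => hj (Fin.ext h)
    have hjlt := j.isLt
    have hilt := i₀.isLt
    by_cases hsp : j.val < i₀.val
    · have hmvE : j.val < E.length := by omega
      have hmvT : j.val < T.length := by omega
      have hget : T.get ⟨j.val, hmvT⟩ = L.get j := by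
        simp only [List.get_eq_getElem, hTdef]
        rw [List.getElem_append_left hmvE]
        exact List.getElem_eraseIdx_of_lt (l := L) (i := i₀.val) (j := j.val) (by omega) hsp
      exact ⟨g ⟨j.val, hmvT⟩, by rw [hgget]; exact hget, ⟨j.val, hmvT⟩,
        rfl, by simp [hsp], hmvE⟩
    · have hmvE : j.val - 1 < E.length := by omega
      have hmvT : j.val - 1 < T.length := by omega
      have hget : T.get ⟨j.val - 1, hmvT⟩ = L.get j := by
        simp only [List.get_eq_getElem, hTdef]
        rw [List.getElem_append_left hmvE]
        rw [List.getElem_eraseIdx_of_ge (l := L) (i := i₀.val) (j := j.val - 1) (by omega) (by omega)]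
        congr 1
        omega
      exact ⟨g ⟨j.val - 1, hmvT⟩, by rw [hgget]; exact hget, ⟨j.val - 1, hmvT⟩,
        rfl, by simp [hsp], hmvE⟩
  choose gE hgEget mE hgEm hgEval hgEltE using hgEex
  -- right encoder
  have hgRex : ∀ (c v : ℕ), c < k → v < D → ∃ e : Fin L'.length,
      L'.get e = k - 1 ∧ ∃ m : Fin T.length, e = g m ∧
        m.val = E.length + (c * D + v) := by
    intro c v hck hv
    have hidx : c * D + v < N := by
      have h1 : c * D + v < (c+1) * D := by
        rw [Nat.succ_mul]; omega
      have h2 : (c+1) * D ≤ k * D := Nat.mul_le_mul_right D hck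
      omega
    have hmvT : E.length + (c * D + v) < T.length := by omega
    have hget : T.get ⟨E.length + (c * D + v), hmvT⟩ = k - 1 := by
      simp only [List.get_eq_getElem, hTdef]
      rw [List.getElem_append_right (by omega)]
      simp
    exact ⟨g ⟨_, hmvT⟩, by rw [hgget]; exact hget, ⟨_, hmvT⟩, rfl, rfl⟩
  choose gR hgRget mR hgRm hgRval using hgRex
  -- injectivity facts
  have hgE_inj : ∀ (j : Fin L.length) (hj : j ≠ i₀) (j' : Fin L.length) (hj' : j' ≠ i₀),
      gE j hj = gE j' hj' → j = j' := by
    intro j hj j' hj' h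
    rw [hgEm j hj, hgEm j' hj'] at h
    have := congrArg Fin.val (hginj h)
    rw [hgEval j hj, hgEval j' hj'] at this
    have h1 := j.isLt
    have h2 := i₀.isLt
    have hjv : j.val ≠ i₀.val := fun h => hj (Fin.ext h)
    have hjv' : j'.val ≠ i₀.val := fun h => hj' (Fin.ext h)
    apply Fin.ext
    split at this <;> split at this <;> omega
  have hgR_inj : ∀ (c v : ℕ) (hck : c < k) (hv : v < D) (c' v' : ℕ) (hck' : c' < k) (hv' : v' < D),
      gR c v hck hv = gR c' v' hck' hv' → c = c' ∧ v = v' := by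
    intro c v hck hv c' v' hck' hv' h
    rw [hgRm, hgRm] at h
    have := congrArg Fin.val (hginj h)
    rw [hgRval, hgRval] at this
    exact pair_inj hv hv' (by omega)
  have hgER : ∀ (j : Fin L.length) (hj : j ≠ i₀) (c v : ℕ) (hck : c < k) (hv : v < D),
      gE j hj ≠ gR c v hck hv := by
    intro j hj c v hck hv h
    rw [hgEm, hgRm] at h
    have h1 := congrArg Fin.val (hginj h)
    rw [hgRval] at h1
    have h2 := hgEltE j hj
    omega
  -- badness extraction
  have hne_cle : ∀ (i j : Fin (n+1)), i < j → ((x i).1 : ℕ) = ((x j).1 : ℕ) →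
      ∃ (p : ℕ) (hp : p < L.get (x i).1) (hq : p < L.get (x j).1),
        (x j).2 ⟨p, hq⟩ < (x i).2 ⟨p, hp⟩ := by
    intro i j hij heq
    have hncle : ¬ CLe (x i) (x j) := fun hcle => hb ⟨i, j, hij, hcle⟩
    rw [cle_iff] at hncle
    push_neg at hncle
    obtain ⟨p, hp, hq, hlt⟩ := hncle heq
    exact ⟨p, hp, hq, hlt⟩
  have hcx0 : cnorm (x 0) < f t := by
    have := hc 0
    simpa using this
  -- construction of elements
  have hP : ∀ i : Fin n, ∃ b : Carrier τ',
      cnorm b ≤ cnorm (x i.succ) ∧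
      ((∃ hne : (x i.succ).1 ≠ i₀, b.1 = gE (x i.succ).1 hne ∧
          ∀ (p : ℕ) (hp : p < L'.get b.1) (hq : p < L.get (x i.succ).1),
            b.2 ⟨p, hp⟩ = (x i.succ).2 ⟨p, hq⟩)
       ∨ (∃ (c v : ℕ) (hck : c < k) (hv : v < D),
          ((x i.succ).1 : ℕ) = (i₀ : ℕ) ∧ b.1 = gR c v hck hv ∧
          (∀ hcl : c < L.get (x i.succ).1, (x i.succ).2 ⟨c, hcl⟩ = v) ∧
          ∀ (p : ℕ) (hp : p < L'.get b.1) (hq : skipf c p < L.get (x i.succ).1),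
            b.2 ⟨p, hp⟩ = (x i.succ).2 ⟨skipf c p, hq⟩)) := by
    intro i
    by_cases hR : (x i.succ).1 = i₀
    · -- same summand as x 0
      obtain ⟨p, hp, hq, hlt⟩ := hne_cle 0 i.succ (Fin.succ_pos i) (by rw [← hi₀def, hR])
      have hck : p < k := hp
      set v : ℕ := (x i.succ).2 ⟨p, hq⟩ with hvdef
      have hv : v < D := by
        have h1 : (x 0).2 ⟨p, hp⟩ ≤ cnorm (x 0) := cnorm_component _ _
        omega
      have hbound : ∀ m : Fin (L'.get (gR p v hck hv)), skipf p m.val < L.get (x i.succ).1 := by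
        intro m
        have h1 : (m : ℕ) < k - 1 := lt_of_lt_of_le m.isLt (le_of_eq (hgRget p v hck hv))
        have h2 : skipf p m.val < k := skipf_lt hck h1
        rw [hR]
        exact h2
      refine ⟨⟨gR p v hck hv, fun m => (x i.succ).2 ⟨skipf p m.val, hbound m⟩⟩, ?_, Or.inr ⟨p, v, hck, hv, by rw [hR], rfl, fun hcl => rfl, fun p' hp' hq' => rfl⟩⟩
      exact cnorm_le _ _ fun m => cnorm_component (x i.succ) ⟨skipf p m.val, hbound m⟩
    · -- different summand
      have hbound : ∀ m : Fin (L'.get (gE (x i.succ).1 hR)), m.val < L.get (x i.succ).1 := by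
        intro m
        exact lt_of_lt_of_le m.isLt (le_of_eq (hgEget (x i.succ).1 hR))
      refine ⟨⟨gE (x i.succ).1 hR, fun m => (x i.succ).2 ⟨m.val, hbound m⟩⟩, ?_, Or.inl ⟨hR, rfl, fun p hp hq => rfl⟩⟩
      exact cnorm_le _ _ fun m => cnorm_component (x i.succ) ⟨m.val, hbound m⟩
  choose y hy1 hy2 using hP
  refine ⟨y, ?_, ?_⟩
  · -- control
    intro i
    have h1 := hc i.succ
    have h2 : (i.succ : ℕ) + t = (i : ℕ) + (t + 1) := by
      rw [Fin.val_succ]; omega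
    rw [h2] at h1
    exact lt_of_le_of_lt (hy1 i) h1
  · -- badness
    rintro ⟨a, b, hab, hcle⟩
    rw [cle_iff] at hcle
    obtain ⟨h1, h2⟩ := hcle
    have habs : a.succ < b.succ := Fin.succ_lt_succ_iff.mpr hab
    rcases hy2 a with ⟨hneA, hA1, hA2⟩ | ⟨cA, vA, hckA, hvA, heqA, hA1, hA2, hA3⟩ <;>
      rcases hy2 b with ⟨hneB, hB1, hB2⟩ | ⟨cB, vB, hckB, hvB, heqB, hB1, hB2, hB3⟩
    · -- L L
      have hgeq : gE (x a.succ).1 hneA = gE (x b.succ).1 hneB := by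
        rw [← hA1, ← hB1]; exact Fin.ext h1
      have hjj := hgE_inj _ _ _ _ hgeq
      apply hb
      refine ⟨a.succ, b.succ, habs, ?_⟩
      rw [cle_iff]
      refine ⟨congrArg Fin.val hjj, fun p hp hq => ?_⟩
      have hpA : p < L'.get (y a).1 := by rw [hA1, hgEget]; exact hp
      have hqB : p < L'.get (y b).1 := by rw [hB1, hgEget]; exact hq
      rw [← hA2 p hpA hp, ← hB2 p hqB hq]
      exact h2 p hpA hqB
    · -- L R : impossible
      exact absurd (by rw [← hA1, ← hB1]; exact Fin.ext h1) (hgER _ hneA cB vB hckB hvB)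
    · -- R L : impossible
      exact absurd (by rw [← hB1, ← hA1]; exact (Fin.ext h1).symm) (hgER _ hneB cA vA hckA hvA)
    · -- R R
      have hgeq : gR cA vA hckA hvA = gR cB vB hckB hvB := by
        rw [← hA1, ← hB1]; exact Fin.ext h1
      obtain ⟨hcc, hvv⟩ := hgR_inj _ _ _ _ _ _ _ _ hgeq
      subst hcc hvv
      apply hb
      refine ⟨a.succ, b.succ, habs, ?_⟩
      rw [cle_iff]
      refine ⟨by rw [heqA, heqB], fun p hp hq => ?_⟩
      by_cases hpc : p = cA
      · subst hpc
        rw [hA2 hp, hB2 hq]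
      · have hpk : p < k := by
          have h := hp
          rw [show (x a.succ).1 = i₀ from Fin.ext heqA] at h
          exact h
        obtain ⟨q, hqk, hsk⟩ := skipf_surj hckA hpk hpc
        subst hsk
        have hpA : q < L'.get (y a).1 := by rw [hA1, hgRget]; omega
        have hqB : q < L'.get (y b).1 := by rw [hB1, hgRget]; omega
        rw [← hA3 q hpA hp, ← hB3 q hqB hq]
        exact h2 q hpA hqB

lemma badSet_zero (f : ℕ → ℕ) (t : ℕ) : BadSet f 0 t = {0} := by
  ext n
  simp only [BadSet, Set.mem_setOf_eq, Set.mem_singleton_iff]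
  constructor
  · rintro ⟨x, -, -⟩
    by_contra hn
    have hpos : 0 < n := Nat.pos_of_ne_zero hn
    have a := x ⟨0, hpos⟩
    have hlen : (dims (0 : Multiset ℕ)).length = 0 := by simp [dims]
    have := a.1.isLt
    omega
  · rintro rfl
    exact zero_mem_badSet f 0 t

lemma badSet_bddAbove (f : ℕ → ℕ) (hmono : Monotone f) (hf0 : 0 < f 0) :
    ∀ τ : Multiset ℕ, ∀ t, BddAbove (BadSet f τ t) := by
  intro τ
  refine dm_wf.induction (C := fun τ => ∀ t, BddAbove (BadSet f τ t)) τ ?_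
  intro τ ih t
  refine ⟨1 + (τ.toFinset.sup fun k => sSup (BadSet f (tkt f τ k t) (t+1))), ?_⟩
  rintro n hn
  match n with
  | 0 => omega
  | Nat.succ m =>
    obtain ⟨x, hc, hb⟩ := hn
    obtain ⟨k, hk, hm⟩ := step_lemma f hmono hf0 τ t m x hc hb
    have hdm : DMStep (tkt f τ k t) τ := by
      refine ⟨k, Multiset.replicate (k * (f t - 1)) (k - 1), hk, ?_, rfl⟩
      intro b hb'
      rw [Multiset.mem_replicate] at hb'
      obtain ⟨hne, rfl⟩ := hb'
      have : k ≠ 0 := by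
        intro h
        apply hne
        rw [h]; simp
      omega
    have hB := ih _ hdm (t+1)
    have h1 : m ≤ sSup (BadSet f (tkt f τ k t) (t+1)) := le_csSup hB hm
    have h2 : sSup (BadSet f (tkt f τ k t) (t+1)) ≤
        τ.toFinset.sup fun k => sSup (BadSet f (tkt f τ k t) (t+1)) :=
      Finset.le_sup (f := fun k' => sSup (BadSet f (tkt f τ k' t) (t+1))) (Multiset.mem_toFinset.mpr hk)
    omega


/-- For any τ ≠ ∅, Bad_τ(t) ≤ max_{k∈τ} (1 + Bad_{τ⟨k,t⟩}(t+1)); and Bad_∅(t) = 0. -/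
theorem badLen_decomposition (f : ℕ → ℕ) (hmono : Monotone f) (hf0 : 0 < f 0) (t : ℕ) :
    (∀ τ : Multiset ℕ, τ ≠ 0 →
      BadLen f τ t ≤ τ.toFinset.sup (fun k => 1 + BadLen f (tkt f τ k t) (t + 1))) ∧
    BadLen f 0 t = 0 := by
  constructor
  · intro τ hτ
    rw [badLen_eq]
    apply csSup_le ⟨0, zero_mem_badSet f τ t⟩
    intro n hn
    match n with
    | 0 => exact Nat.zero_le _
    | Nat.succ m =>
      obtain ⟨x, hc, hb⟩ := hn
      obtain ⟨k, hk, hm⟩ := step_lemma f hmono hf0 τ t m x hc hb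
      have hB := badSet_bddAbove f hmono hf0 (tkt f τ k t) (t+1)
      have h1 : m ≤ BadLen f (tkt f τ k t) (t+1) := le_csSup hB hm
      have h2 : 1 + BadLen f (tkt f τ k t) (t+1) ≤
          τ.toFinset.sup fun k => 1 + BadLen f (tkt f τ k t) (t + 1) :=
        Finset.le_sup (f := fun k' => 1 + BadLen f (tkt f τ k' t) (t + 1)) (Multiset.mem_toFinset.mpr hk)
      omega
  · rw [badLen_eq, badSet_zero]
    exact csSup_singleton 0
end

section
/- The maximal length of a t-controlled r-bad sequence over ℕ^τ equals the maximal length of a t-controlled bad sequence over ℕ^{r×τ}: Bad_{r,τ}(t) = Bad_{r×τ}(t). -/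
/-- A sequence is r-good if it contains an increasing subsequence of length r+1. -/
def RGood (r : ℕ) {τ : Multiset ℕ} {n : ℕ} (x : Fin n → Carrier τ) : Prop :=
  ∃ c : Fin (r + 1) → Fin n, StrictMono c ∧
    ∀ i : Fin r, CLe (x (c i.castSucc)) (x (c i.succ))

/-- Bad_{r,τ}(t): the maximal length of a t-controlled r-bad sequence over ℕ^τ. -/
noncomputable def BadLenR (f : ℕ → ℕ) (r : ℕ) (τ : Multiset ℕ) (t : ℕ) : ℕ :=
  sSup {n | ∃ x : Fin n → Carrier τ, Ctrl f t x ∧ ¬ RGood r x}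


section Aux

lemma cle_refl {τ : Multiset ℕ} (a : Carrier τ) : CLe a a := ⟨rfl, fun _ => le_rfl⟩

lemma cle_trans {τ : Multiset ℕ} {a b c : Carrier τ} (h1 : CLe a b) (h2 : CLe b c) : CLe a c := by
  obtain ⟨e1, H1⟩ := h1; obtain ⟨e2, H2⟩ := h2
  exact ⟨e1.trans e2, fun j => le_trans (H1 j) (H2 _)⟩

lemma card_fiber (l : List ℕ) (v : ℕ) :
    Fintype.card {i : Fin l.length // l.get i = v} = l.count v := by
  rw [Fintype.card_subtype]
  exact Fin.card_filter_univ_eq_vector_get_eq_count v ⟨l, rfl⟩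

lemma dims_count (τ : Multiset ℕ) (v : ℕ) : (dims τ).count v = τ.count v := by
  rw [← Multiset.coe_count, dims, Multiset.sort_eq]

noncomputable def E (r : ℕ) (τ : Multiset ℕ) :
    Fin (dims (r • τ)).length ≃ Fin (dims τ).length × Fin r :=
  Equiv.ofFiberEquiv (f := fun i => (dims (r • τ)).get i) (g := fun p => (dims τ).get p.1)
    (fun v => Fintype.equivOfCardEq (by
      have e2 : {p : Fin (dims τ).length × Fin r // (dims τ).get p.1 = v} ≃
          {i : Fin (dims τ).length // (dims τ).get i = v} × Fin r :=
        ⟨fun x => (⟨x.1.1, x.2⟩, x.1.2), fun y => ⟨(y.1.1, y.2), y.1.property⟩,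
          fun x => rfl, fun y => rfl⟩
      rw [card_fiber, Fintype.card_congr e2, Fintype.card_prod, card_fiber, Fintype.card_fin,
        dims_count, dims_count, Multiset.count_nsmul, mul_comm]))

lemma E_get (r : ℕ) (τ : Multiset ℕ) (i : Fin (dims (r • τ)).length) :
    (dims τ).get (E r τ i).1 = (dims (r • τ)).get i :=
  by unfold E; exact Equiv.ofFiberEquiv_map (f := fun i => (dims (r • τ)).get i) (g := fun p : Fin (dims τ).length × Fin r => (dims τ).get p.1) _ i

lemma E_symm_get (r : ℕ) (τ : Multiset ℕ) (p : Fin (dims τ).length × Fin r) :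
    (dims (r • τ)).get ((E r τ).symm p) = (dims τ).get p.1 := by
  conv_rhs => rw [← (E r τ).apply_symm_apply p]
  rw [E_get]

lemma cnorm_mk {τ σ : Multiset ℕ} (a : Carrier τ) (i : Fin (dims σ).length)
    (h : (dims σ).get i = (dims τ).get a.1) :
    cnorm (⟨i, fun k => a.2 (Fin.cast h k)⟩ : Carrier σ) = cnorm a := by
  unfold cnorm
  apply le_antisymm
  · exact Finset.sup_le fun k _ => Finset.le_sup (f := a.2) (Finset.mem_univ (Fin.cast h k))
  · exact Finset.sup_le fun k _ =>
      Finset.le_sup (f := fun k => a.2 (Fin.cast h k)) (Finset.mem_univ (Fin.cast h.symm k))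

lemma chain_trans {τ : Multiset ℕ} {m n : ℕ} (x : Fin m → Carrier τ) (c : Fin (n+1) → Fin m)
    (hch : ∀ i : Fin n, CLe (x (c i.castSucc)) (x (c i.succ))) :
    ∀ s s' : Fin (n+1), s ≤ s' → CLe (x (c s)) (x (c s')) := by
  intro s s' h
  obtain ⟨d, hd⟩ : ∃ d, (s' : ℕ) = (s : ℕ) + d := ⟨s' - s, by omega⟩
  clear h
  induction d generalizing s' with
  | zero => have : s = s' := Fin.ext (by omega); subst this; exact cle_refl _
  | succ d ih =>
    have hdn : (s : ℕ) + d < n := by have := s'.isLt; omega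
    have hmid : (s : ℕ) + d < n + 1 := by omega
    have h1 : CLe (x (c s)) (x (c ⟨(s : ℕ) + d, hmid⟩)) := ih _ rfl
    have e1 : (⟨(s : ℕ) + d, hdn⟩ : Fin n).castSucc = ⟨(s : ℕ) + d, hmid⟩ := Fin.ext rfl
    have e2 : (⟨(s : ℕ) + d, hdn⟩ : Fin n).succ = s' := Fin.ext (by simp [Fin.val_succ]; omega)
    have := hch ⟨(s : ℕ) + d, hdn⟩
    rw [e1, e2] at this
    exact cle_trans h1 this

lemma rbad_of_bad (f : ℕ → ℕ) (t r : ℕ) (τ : Multiset ℕ) {m : ℕ}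
    (y : Fin m → Carrier (r • τ)) (hc : Ctrl f t y) (hb : IsBad y) :
    ∃ x : Fin m → Carrier τ, Ctrl f t x ∧ ¬ RGood r x := by
  set x : Fin m → Carrier τ := fun i =>
    ⟨(E r τ (y i).1).1, fun k => (y i).2 (Fin.cast (E_get r τ (y i).1) k)⟩ with hx
  refine ⟨x, fun i => ?_, ?_⟩
  · rw [show cnorm (x i) = cnorm (y i) from cnorm_mk (y i) _ _]
    exact hc i
  · rintro ⟨c, hm, hch⟩
    have htr := chain_trans x c hch
    have hcard : Fintype.card (Fin r) < Fintype.card (Fin (r + 1)) := by simp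
    obtain ⟨s, s', hne, heq⟩ :=
      Fintype.exists_ne_map_eq_of_card_lt (fun s : Fin (r+1) => (E r τ (y (c s)).1).2) hcard
    wlog hlt : s < s' generalizing s s'
    · exact this s' s hne.symm heq.symm (by omega)
    have hcle : CLe (x (c s)) (x (c s')) := htr s s' hlt.le
    obtain ⟨h1, h2⟩ := hcle
    have hfst : E r τ (y (c s)).1 = E r τ (y (c s')).1 := Prod.ext h1 heq
    have hidx : (y (c s)).1 = (y (c s')).1 := (E r τ).injective hfst
    refine hb ⟨c s, c s', hm hlt, hidx, fun j0 => ?_⟩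
    exact h2 (Fin.cast (E_get r τ (y (c s)).1).symm j0)

lemma bad_of_rbad (f : ℕ → ℕ) (t r : ℕ) (hr : 1 ≤ r) (τ : Multiset ℕ) {m : ℕ}
    (x : Fin m → Carrier τ) (hc : Ctrl f t x) (hg : ¬ RGood r x) :
    ∃ y : Fin m → Carrier (r • τ), Ctrl f t y ∧ IsBad y := by
  classical
  set S : Fin m → Set ℕ := fun i =>
    {L | ∃ c : Fin (L+1) → Fin m, StrictMono c ∧
      (∀ s : Fin L, CLe (x (c s.castSucc)) (x (c s.succ))) ∧ c (Fin.last L) = i} with hS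
  have h0 : ∀ i, 0 ∈ S i := by
    intro i
    refine ⟨fun _ => i, ?_, fun s => absurd s.isLt (by omega), rfl⟩
    intro a b hab
    exact absurd hab (by omega)
  have hbound : ∀ i L, L ∈ S i → L < r := by
    intro i L hL
    obtain ⟨c, hm, hch, -⟩ := hL
    by_contra h
    push_neg at h
    apply hg
    refine ⟨fun s => c (Fin.castLE (by omega) s), hm.comp ?_, fun s => hch ⟨s.1, by omega⟩⟩
    intro a b hab
    rw [Fin.lt_def, Fin.coe_castLE, Fin.coe_castLE]
    exact hab
  have hbdd : ∀ i, BddAbove (S i) := fun i => ⟨r, fun L hL => (hbound i L hL).le⟩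
  set ℓ : Fin m → ℕ := fun i => sSup (S i) with hℓ
  have hmem : ∀ i, ℓ i ∈ S i := fun i => Nat.sSup_mem ⟨0, h0 i⟩ (hbdd i)
  have hltr : ∀ i, ℓ i < r := fun i => hbound i _ (hmem i)
  have hstep : ∀ i j : Fin m, i < j → CLe (x i) (x j) → ℓ i < ℓ j := by
    intro i j hij hle
    obtain ⟨c, hm, hch, hlast⟩ := hmem i
    have hmemj : ℓ i + 1 ∈ S j := by
      refine ⟨fun s => if h : (s : ℕ) < ℓ i + 1 then c ⟨s, h⟩ else j, ?_, ?_, ?_⟩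
      · intro a b hab
        rw [Fin.lt_def] at hab
        by_cases hb : (b : ℕ) < ℓ i + 1
        · have ha : (a : ℕ) < ℓ i + 1 := by omega
          simp only [dif_pos ha, dif_pos hb]
          exact hm (by rw [Fin.lt_def]; exact hab)
        · by_cases ha : (a : ℕ) < ℓ i + 1
          · simp only [dif_pos ha, dif_neg hb]
            have h1 : c ⟨a, ha⟩ ≤ c (Fin.last (ℓ i)) :=
              hm.monotone (by rw [Fin.le_def, Fin.val_last]; omega)
            rw [hlast] at h1
            exact lt_of_le_of_lt h1 hij
          · exfalso; have h3 := a.isLt; have h4 := b.isLt; omega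
      · intro s
        have hcs : ((s.castSucc : Fin (ℓ i + 2)) : ℕ) < ℓ i + 1 := by
          rw [Fin.coe_castSucc]; exact s.isLt
        by_cases hs : (s : ℕ) < ℓ i
        · have hss : ((s.succ : Fin (ℓ i + 2)) : ℕ) < ℓ i + 1 := by
            rw [Fin.val_succ]; omega
          simp only [dif_pos hcs, dif_pos hss]
          exact hch ⟨s, hs⟩
        · have hsL : (s : ℕ) = ℓ i := by have := s.isLt; omega
          have hss : ¬ ((s.succ : Fin (ℓ i + 2)) : ℕ) < ℓ i + 1 := by
            rw [Fin.val_succ]; omega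
          simp only [dif_pos hcs, dif_neg hss]
          have he : (⟨((s.castSucc : Fin (ℓ i + 2)) : ℕ), hcs⟩ : Fin (ℓ i + 1)) =
              Fin.last (ℓ i) := Fin.ext (by simpa using hsL)
          rw [he, hlast]
          exact hle
      · have hl : ¬ ((Fin.last (ℓ i + 1) : Fin (ℓ i + 2)) : ℕ) < ℓ i + 1 := by simp
        simp only [dif_neg hl]
    have h2 : ℓ i + 1 ≤ ℓ j := le_csSup (hbdd j) hmemj
    omega
  set y : Fin m → Carrier (r • τ) := fun i =>
    ⟨(E r τ).symm ((x i).1, ⟨ℓ i, hltr i⟩),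
     fun k => (x i).2 (Fin.cast (E_symm_get r τ ((x i).1, ⟨ℓ i, hltr i⟩)) k)⟩ with hy
  refine ⟨y, fun i => ?_, ?_⟩
  · rw [show cnorm (y i) = cnorm (x i) from cnorm_mk (x i) _ _]
    exact hc i
  · rintro ⟨i, j, hij, hidx, h2⟩
    have hpair : ((x i).1, (⟨ℓ i, hltr i⟩ : Fin r)) = ((x j).1, (⟨ℓ j, hltr j⟩ : Fin r)) :=
      (E r τ).symm.injective hidx
    have h1 : (x i).1 = (x j).1 := congrArg Prod.fst hpair
    have hℓeq : ℓ i = ℓ j := congrArg (fun p => (p.2 : ℕ)) hpair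
    have hcle : CLe (x i) (x j) :=
      ⟨h1, fun k => h2 (Fin.cast (E_symm_get r τ ((x i).1, ⟨ℓ i, hltr i⟩)).symm k)⟩
    have := hstep i j hij hcle
    omega

end Aux

/-- The maximal length of a t-controlled r-bad sequence over ℕ^τ equals the
maximal length of a t-controlled bad sequence over ℕ^{r×τ}. -/
theorem badLenR_eq_badLen_smul (f : ℕ → ℕ) (hmono : Monotone f) (hf0 : 0 < f 0)
    (r : ℕ) (hr : 1 ≤ r) (τ : Multiset ℕ) (t : ℕ) :
    BadLenR f r τ t = BadLen f (r • τ) t := by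
  unfold BadLenR BadLen
  congr 1
  ext m
  constructor
  · rintro ⟨x, hc, hg⟩
    exact bad_of_rbad f t r hr τ x hc hg
  · rintro ⟨y, hc, hb⟩
    exact rbad_of_bad f t r τ y hc hb
end

section
/- For wqos A and B with elements a ∈ A, b ∈ B, the residual (A × B)/⟨a,b⟩ strongly reflects into the disjoint sum (A/a) × B + A × (B/b); consequently for powers, (A^k)/⟨a,…,a⟩ strongly reflects into the disjoint sum of k copies of (A/a) × A^{k−1}. -/
/-- The disjoint-sum ordering on a sum of two ordered sets. -/
def SumLe {α β : Type*} (leA : α → α → Prop) (leB : β → β → Prop) :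
    α ⊕ β → α ⊕ β → Prop
  | .inl p, .inl q => leA p q
  | .inr p, .inr q => leB p q
  | _, _ => False

/-- Strong reflection of residuals of products and powers.  Here
A = ℕ^ka and B = ℕ^kb with the product orderings, A/a = {x ∈ A : a ≰ x},
products carry the componentwise ordering, sums the disjoint-union ordering,
and norms are the infinity norms of all the numerical coordinates.
Part 1: (A × B)/⟨a,b⟩ strongly reflects into (A/a) × B + A × (B/b).
Part 2: (A^{k+1})/⟨a,…,a⟩ strongly reflects into the disjoint sum of k+1
copies of (A/a) × A^k. -/
theorem residual_strong_reflections (ka kb : ℕ) (a : Fin ka → ℕ) (b : Fin kb → ℕ) :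
    (∃ h : {p : (Fin ka → ℕ) × (Fin kb → ℕ) // ¬ (a ≤ p.1 ∧ b ≤ p.2)} →
        ({x : Fin ka → ℕ // ¬ a ≤ x} × (Fin kb → ℕ)) ⊕
        ((Fin ka → ℕ) × {y : Fin kb → ℕ // ¬ b ≤ y}),
      (∀ p q, SumLe
          (fun u v => u.1.1 ≤ v.1.1 ∧ u.2 ≤ v.2)
          (fun u v => u.1 ≤ v.1 ∧ u.2.1 ≤ v.2.1)
          (h p) (h q) → p.1.1 ≤ q.1.1 ∧ p.1.2 ≤ q.1.2) ∧
      (∀ p, (match h p with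
          | .inl u => max (normInf u.1.1) (normInf u.2)
          | .inr u => max (normInf u.1) (normInf u.2.1)) ≤
        max (normInf p.1.1) (normInf p.1.2))) ∧
    (∀ k : ℕ,
      ∃ h : {v : Fin (k + 1) → (Fin ka → ℕ) // ¬ (fun _ => a) ≤ v} →
        Fin (k + 1) × ({x : Fin ka → ℕ // ¬ a ≤ x} × (Fin k → (Fin ka → ℕ))),
      (∀ u v, (h u).1 = (h v).1 → (h u).2.1.1 ≤ (h v).2.1.1 →
          (h u).2.2 ≤ (h v).2.2 → u.1 ≤ v.1) ∧
      (∀ u, max (normInf (h u).2.1.1) (Finset.univ.sup fun j => normInf ((h u).2.2 j)) ≤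
        Finset.univ.sup fun i => normInf (u.1 i))) := by
  classical
  constructor
  · refine ⟨fun p => if h1 : a ≤ p.1.1 then
        .inr ⟨p.1.1, p.1.2, fun h2 => p.2 ⟨h1, h2⟩⟩
      else .inl ⟨⟨p.1.1, h1⟩, p.1.2⟩, ?_, ?_⟩
    · intro p q hle
      by_cases hp : a ≤ p.1.1 <;> by_cases hq : a ≤ q.1.1 <;>
        simp only [dif_pos, dif_neg, hp, hq, SumLe, not_false_iff] at hle <;>
        exact hle
    · intro p
      by_cases hp : a ≤ p.1.1 <;> simp [hp]
  · intro k
    have key : ∀ v : {v : Fin (k + 1) → (Fin ka → ℕ) // ¬ (fun _ => a) ≤ v},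
        ∃ i, ¬ a ≤ v.1 i := by
      intro v
      by_contra hc
      push_neg at hc
      exact v.2 fun i => hc i
    refine ⟨fun v => ⟨(key v).choose, ⟨v.1 (key v).choose, (key v).choose_spec⟩,
        fun j => v.1 ((key v).choose.succAbove j)⟩, ?_, ?_⟩
    · intro u v h1 h2 h3 m
      simp only at h1 h2 h3
      rw [← h1] at h2 h3
      rcases eq_or_ne m (key u).choose with rfl | hm
      · exact h2
      · obtain ⟨j, rfl⟩ := Fin.exists_succAbove_eq hm
        exact h3 j
    · intro u
      simp only [max_le_iff]
      constructor
      · exact Finset.le_sup (f := fun i => normInf (u.1 i)) (Finset.mem_univ _)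
      · exact Finset.sup_le fun j _ =>
          Finset.le_sup (f := fun i => normInf (u.1 i)) (Finset.mem_univ _)
end

section
/- For x ∈ ℕ^k with k > 0 and ‖x‖_∞ ≤ f(t) − 1, the residual ℕ^k / x strongly reflects into the disjoint sum of k·(f(t)−1) copies of ℕ^{k−1}. -/
/-- For x ∈ ℕ^k with k > 0 (k = k'+1) and ‖x‖_∞ ≤ f(t) − 1, the residual
ℕ^k / x = {y : x ≰ y} strongly reflects into the disjoint sum of
k·(f(t)−1) copies of ℕ^{k−1}: there is a map which reflects the order
(equal summand and componentwise ≤ on the target imply ≤ on the source)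
and does not increase the infinity norm. -/
theorem residual_pow_strong_reflection (f : ℕ → ℕ) (t k' : ℕ)
    (hft : 1 ≤ f t) (x : Fin (k' + 1) → ℕ) (hx : normInf x ≤ f t - 1) :
    ∃ h : {y : Fin (k' + 1) → ℕ // ¬ x ≤ y} →
        Fin ((k' + 1) * (f t - 1)) × (Fin k' → ℕ),
      (∀ u v, (h u).1 = (h v).1 → (h u).2 ≤ (h v).2 → u.1 ≤ v.1) ∧
      (∀ u, normInf (h u).2 ≤ normInf u.1) := by
  have hex : ∀ y : {y : Fin (k' + 1) → ℕ // ¬ x ≤ y}, ∃ i, y.1 i < x i := by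
    intro y
    by_contra h
    push_neg at h
    exact y.2 (fun i => h i)
  choose idx hidx using hex
  have hxle : ∀ i, x i ≤ f t - 1 := fun i =>
    le_trans (Finset.le_sup (Finset.mem_univ i)) hx
  have hlt : ∀ u : {y : Fin (k' + 1) → ℕ // ¬ x ≤ y}, u.1 (idx u) < f t - 1 := fun u =>
    lt_of_lt_of_le (hidx u) (hxle _)
  refine ⟨fun (u : {y : Fin (k' + 1) → ℕ // ¬ x ≤ y}) =>
    (finProdFinEquiv (idx u, ⟨u.1 (idx u), hlt u⟩),
      fun j => u.1 ((idx u).succAbove j)), ?_, ?_⟩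
  · intro u v h1 h2
    simp only at h1 h2
    have h1' := finProdFinEquiv.injective h1
    have hi : idx u = idx v := congrArg Prod.fst h1'
    have hval' : u.1 (idx u) = v.1 (idx v) := congrArg (fun p => (p.2 : ℕ)) h1'
    intro m
    by_cases hm : m = idx u
    · subst hm
      rw [hval', ← hi]
    · obtain ⟨j, hj⟩ := Fin.exists_succAbove_eq hm
      have h3 := h2 j
      simp only at h3
      rw [← hi, hj] at h3
      exact h3
  · intro u
    simp only [normInf]
    exact Finset.sup_le fun j _ => Finset.le_sup (Finset.mem_univ _)
end

section
/- Minimizing strategy for the recursive bound M: for the function M defined by M_∅(t) = 0 and M_τ(t) = max_{k∈τ} (1 + M_{τ⟨k,t⟩}(t+1)), the maximum is attained at k = min τ; i.e., for k = min τ and any l ∈ τ, M_{τ⟨l,t⟩}(t+1) ≤ M_{τ⟨k,t⟩}(t+1), hence M_τ(t) = 1 + M_{τ⟨min τ, t⟩}(t+1) for τ ≠ ∅. -/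
/-- The "hydra step" relation: σ is obtained from τ by removing one copy of an
element k ∈ τ and adding finitely many copies of k − 1 (none if k = 0). -/
def MStep (σ τ : Multiset ℕ) : Prop :=
  ∃ k n, k ∈ τ ∧ (k = 0 → n = 0) ∧ σ = τ.erase k + Multiset.replicate n (k - 1)

theorem MStep.tkt {f : ℕ → ℕ} {τ : Multiset ℕ} {k t : ℕ} (hk : k ∈ τ) :
    MStep (tkt f τ k t) τ :=
  ⟨k, k * (f t - 1), hk, fun h => by simp [h], rfl⟩

theorem mstep_acc_cons : ∀ a : ℕ, ∀ τ : Multiset ℕ, Acc MStep τ → Acc MStep (a ::ₘ τ) := by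
  intro a
  induction a using Nat.strong_induction_on with
  | _ a iha =>
    intro τ hacc
    induction hacc with
    | intro τ hτ ihτ =>
      constructor
      intro σ hσ
      obtain ⟨k, n, hk, h0, rfl⟩ := hσ
      by_cases hka : k = a
      · subst hka
        rw [Multiset.erase_cons_head]
        rcases Nat.eq_zero_or_pos k with h | h
        · rw [h0 h]
          simpa using Acc.intro τ hτ
        · clear ihτ h0
          induction n with
          | zero => simpa using Acc.intro τ hτ
          | succ m ihm =>
            have heq : τ + Multiset.replicate (m + 1) (k - 1)
                = (k - 1) ::ₘ (τ + Multiset.replicate m (k - 1)) := by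
              rw [Multiset.replicate_succ, Multiset.add_cons]
            rw [heq]
            exact iha (k - 1) (by omega) _ ihm
      · have hk' : k ∈ τ := by
          rcases Multiset.mem_cons.mp hk with h | h
          · exact absurd h hka
          · exact h
        rw [Multiset.erase_cons_tail _ (fun h => hka h.symm), Multiset.cons_add]
        exact ihτ _ ⟨k, n, hk', h0, rfl⟩

theorem mstep_wf : WellFounded MStep := by
  constructor
  intro τ
  induction τ using Multiset.induction with
  | empty =>
    constructor
    intro σ hσ
    obtain ⟨k, n, hk, -, -⟩ := hσ
    exact absurd hk (by simp)
  | cons a τ ih => exact mstep_acc_cons a τ ih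

/-- Domination preorder: every element of σ can be injectively matched with a
≥ element of ρ. -/
def MDom (σ ρ : Multiset ℕ) : Prop :=
  ∃ ρ', ρ' ≤ ρ ∧ Multiset.Rel (· ≤ ·) σ ρ'

theorem mdom_refl (σ : Multiset ℕ) : MDom σ σ := by
  refine ⟨σ, le_rfl, ?_⟩
  induction σ using Multiset.induction with
  | empty => exact Multiset.Rel.zero
  | cons a τ ih => exact Multiset.Rel.cons le_rfl ih

theorem mdom_add {σ₁ ρ₁ σ₂ ρ₂ : Multiset ℕ} (h₁ : MDom σ₁ ρ₁) (h₂ : MDom σ₂ ρ₂) :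
    MDom (σ₁ + σ₂) (ρ₁ + ρ₂) := by
  obtain ⟨ρ₁', hle₁, hrel₁⟩ := h₁
  obtain ⟨ρ₂', hle₂, hrel₂⟩ := h₂
  exact ⟨ρ₁' + ρ₂', add_le_add hle₁ hle₂, hrel₁.add hrel₂⟩

theorem mdom_replicate {m n a b : ℕ} (hmn : m ≤ n) (hab : a ≤ b) :
    MDom (Multiset.replicate m a) (Multiset.replicate n b) := by
  refine ⟨Multiset.replicate m b, (Multiset.replicate_le_replicate b).2 hmn, ?_⟩
  clear hmn
  induction m with
  | zero => exact Multiset.Rel.zero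
  | succ p ih => simpa [Multiset.replicate_succ] using Multiset.Rel.cons hab ih

theorem mdom_mem {σ ρ : Multiset ℕ} (h : MDom σ ρ) {j : ℕ} (hj : j ∈ σ) :
    ∃ j' ∈ ρ, j ≤ j' ∧ MDom (σ.erase j) (ρ.erase j') := by
  obtain ⟨ρ', hle, hrel⟩ := h
  rw [← Multiset.cons_erase hj, Multiset.rel_cons_left] at hrel
  obtain ⟨b, bs', hjb, hrel', rfl⟩ := hrel
  refine ⟨b, Multiset.mem_of_le hle (Multiset.mem_cons_self b bs'), hjb,
    ⟨bs', ?_, hrel'⟩⟩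
  have := Multiset.erase_le_erase b hle
  rwa [Multiset.erase_cons_head] at this

/-- Monotonicity of M with respect to domination. -/
theorem M_mono (f : ℕ → ℕ) (M : Multiset ℕ → ℕ → ℕ)
    (hM0 : ∀ t, M 0 t = 0)
    (hMrec : ∀ τ : Multiset ℕ, τ ≠ 0 → ∀ t,
      M τ t = τ.toFinset.sup (fun k => 1 + M (tkt f τ k t) (t + 1))) :
    ∀ ρ σ : Multiset ℕ, ∀ t : ℕ, MDom σ ρ → M σ t ≤ M ρ t := by
  intro ρ
  induction ρ using mstep_wf.induction with
  | _ ρ ih =>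
    intro σ t hdom
    by_cases hσ : σ = 0
    · subst hσ; rw [hM0]; exact Nat.zero_le _
    · obtain ⟨j, hj⟩ := Multiset.exists_mem_of_ne_zero hσ
      obtain ⟨j₀, hj₀ρ, -, -⟩ := mdom_mem hdom hj
      have hρ : ρ ≠ 0 := fun h => by simp [h] at hj₀ρ
      rw [hMrec σ hσ t, hMrec ρ hρ t]
      apply Finset.sup_le
      intro i hi
      have hiσ : i ∈ σ := Multiset.mem_toFinset.mp hi
      obtain ⟨i', hi'ρ, hii', hdom'⟩ := mdom_mem hdom hiσ
      refine le_trans ?_ (Finset.le_sup (Multiset.mem_toFinset.mpr hi'ρ))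
      apply Nat.add_le_add_left
      apply ih _ (MStep.tkt hi'ρ)
      exact mdom_add hdom'
        (mdom_replicate (Nat.mul_le_mul_right _ hii') (Nat.sub_le_sub_right hii' 1))

/-- Minimizing strategy for the recursive bound M: for M defined by M_∅(t) = 0
and M_τ(t) = max_{k∈τ}(1 + M_{τ⟨k,t⟩}(t+1)), the maximum is attained at
k = min τ: for any l ∈ τ, M_{τ⟨l,t⟩}(t+1) ≤ M_{τ⟨min τ,t⟩}(t+1), hence
M_τ(t) = 1 + M_{τ⟨min τ,t⟩}(t+1) for τ ≠ ∅. -/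
theorem M_min_strategy (f : ℕ → ℕ) (hmono : Monotone f) (hf0 : 0 < f 0)
    (M : Multiset ℕ → ℕ → ℕ)
    (hM0 : ∀ t, M 0 t = 0)
    (hMrec : ∀ τ : Multiset ℕ, τ ≠ 0 → ∀ t,
      M τ t = τ.toFinset.sup (fun k => 1 + M (tkt f τ k t) (t + 1))) :
    ∀ τ : Multiset ℕ, τ ≠ 0 → ∀ t : ℕ, ∀ k : ℕ,
      (k ∈ τ ∧ ∀ l ∈ τ, k ≤ l) →
      (∀ l ∈ τ, M (tkt f τ l t) (t + 1) ≤ M (tkt f τ k t) (t + 1)) ∧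
      M τ t = 1 + M (tkt f τ k t) (t + 1) := by
  intro τ
  induction τ using mstep_wf.induction with
  | _ τ ihτ =>
    intro hτ0 t k ⟨hkτ, hkmin⟩
    have part1 : ∀ l ∈ τ, M (tkt f τ l t) (t + 1) ≤ M (tkt f τ k t) (t + 1) := by
      intro l hl
      by_cases hlk : l = k
      · subst hlk; exact le_rfl
      · have hkl : k < l := lt_of_le_of_ne (hkmin l hl) (fun h => hlk h.symm)
        set e := f t - 1 with he_def
        set e' := f (t + 1) - 1 with he'_def
        have hee' : e ≤ e' := Nat.sub_le_sub_right (hmono (Nat.le_succ t)) 1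
        -- k is still the minimum of τ⟨l,t⟩
        have hkσl : k ∈ tkt f τ l t := by
          rw [tkt, Multiset.mem_add]
          exact Or.inl ((Multiset.mem_erase_of_ne (fun h => hlk h.symm)).2 hkτ)
        have hσl0 : tkt f τ l t ≠ 0 := fun h => by simp [h] at hkσl
        have hminσl : ∀ m ∈ tkt f τ l t, k ≤ m := by
          intro m hm
          rw [tkt, Multiset.mem_add] at hm
          rcases hm with hm | hm
          · exact hkmin m (Multiset.mem_of_mem_erase hm)
          · rw [Multiset.eq_of_mem_replicate hm]; omega
        -- apply the IH to τ⟨l,t⟩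
        obtain ⟨-, hIH2⟩ := ihτ _ (MStep.tkt hl) hσl0 (t + 1) k ⟨hkσl, hminσl⟩
        -- l ∈ τ⟨k,t⟩
        have hlσk : l ∈ tkt f τ k t := by
          rw [tkt, Multiset.mem_add]
          exact Or.inl ((Multiset.mem_erase_of_ne hlk).2 hl)
        have hσk0 : tkt f τ k t ≠ 0 := fun h => by simp [h] at hlσk
        -- rewrite the two double steps
        have hkel : k ∈ τ.erase l := (Multiset.mem_erase_of_ne (fun h => hlk h.symm)).2 hkτ
        have hlek : l ∈ τ.erase k := (Multiset.mem_erase_of_ne hlk).2 hl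
        have hA : tkt f (tkt f τ l t) k (t + 1)
            = ((τ.erase l).erase k + Multiset.replicate (l * e) (l - 1)
                + Multiset.replicate (k * e) (k - 1))
              + Multiset.replicate (k * (e' - e)) (k - 1) := by
          rw [tkt, tkt, Multiset.erase_add_left_pos _ hkel]
          have : k * e' = k * e + k * (e' - e) := by
            rw [← Nat.mul_add, Nat.add_sub_cancel' hee']
          rw [this, Multiset.replicate_add]
          abel
        have hB : tkt f (tkt f τ k t) l (t + 1)
            = ((τ.erase l).erase k + Multiset.replicate (l * e) (l - 1)
                + Multiset.replicate (k * e) (k - 1))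
              + Multiset.replicate (l * (e' - e)) (l - 1) := by
          rw [tkt, tkt, Multiset.erase_add_left_pos _ hlek, Multiset.erase_comm]
          have : l * e' = l * e + l * (e' - e) := by
            rw [← Nat.mul_add, Nat.add_sub_cancel' hee']
          rw [this, Multiset.replicate_add]
          abel
        have hdomAB : MDom (tkt f (tkt f τ l t) k (t + 1)) (tkt f (tkt f τ k t) l (t + 1)) := by
          rw [hA, hB]
          exact mdom_add (mdom_refl _)
            (mdom_replicate (Nat.mul_le_mul_right _ hkl.le) (Nat.sub_le_sub_right hkl.le 1))
        have hMAB := M_mono f M hM0 hMrec _ _ (t + 2) hdomAB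
        calc M (tkt f τ l t) (t + 1)
            = 1 + M (tkt f (tkt f τ l t) k (t + 1)) (t + 2) := hIH2
          _ ≤ 1 + M (tkt f (tkt f τ k t) l (t + 1)) (t + 2) := Nat.add_le_add_left hMAB 1
          _ ≤ M (tkt f τ k t) (t + 1) := by
              rw [hMrec _ hσk0 (t + 1)]
              exact Finset.le_sup (f := fun j => 1 + M (tkt f (tkt f τ k t) j (t + 1)) (t + 2))
                (Multiset.mem_toFinset.mpr hlσk)
    refine ⟨part1, ?_⟩
    rw [hMrec τ hτ0 t]
    apply le_antisymm
    · apply Finset.sup_le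
      intro i hi
      exact Nat.add_le_add_left (part1 i (Multiset.mem_toFinset.mp hi)) 1
    · exact Finset.le_sup (f := fun j => 1 + M (tkt f τ j t) (t + 1))
        (Multiset.mem_toFinset.mpr hkτ)
end

section
/- Monotonicity of M with respect to the dominance ordering: if τ ⊑ τ' then M_τ(t) ≤ M_{τ'}(t) for all t. -/
/-- The dominance ordering {a₁,…,a_n} ⊑ {b₁,…,b_m} (elements listed in
decreasing order): n ≤ m and a_i ≤ b_i for all i ≤ n.  Here formulated with
the ascending sorted lists, matched from their top ends. -/
def Dom (τ τ' : Multiset ℕ) : Prop :=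
  Multiset.card τ ≤ Multiset.card τ' ∧
  ∀ i < Multiset.card τ,
    (τ.sort (· ≤ ·)).getD (Multiset.card τ - 1 - i) 0 ≤
    (τ'.sort (· ≤ ·)).getD (Multiset.card τ' - 1 - i) 0


def cnt (s : ℕ) (τ : Multiset ℕ) : ℕ := Multiset.countP (fun x => s ≤ x) τ

lemma cnt_zero (τ : Multiset ℕ) : cnt 0 τ = Multiset.card τ := by
  simp [cnt, Multiset.countP_eq_card]

lemma cnt_cons (s a : ℕ) (τ : Multiset ℕ) :
    cnt s (a ::ₘ τ) = cnt s τ + if s ≤ a then 1 else 0 :=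
  Multiset.countP_cons _ _ _

lemma cnt_anti {s s' : ℕ} (h : s ≤ s') (τ : Multiset ℕ) : cnt s' τ ≤ cnt s τ := by
  induction τ using Multiset.induction with
  | empty => simp [cnt]
  | cons a τ ih =>
      rw [cnt_cons, cnt_cons]
      split_ifs <;> omega

lemma cnt_split (k : ℕ) (τ : Multiset ℕ) :
    cnt k τ = τ.count k + cnt (k + 1) τ := by
  induction τ using Multiset.induction with
  | empty => simp [cnt]
  | cons a τ ih =>
      rw [cnt_cons, cnt_cons, Multiset.count_cons, ih]
      split_ifs <;> omega

lemma cnt_add (s : ℕ) (σ ρ : Multiset ℕ) : cnt s (σ + ρ) = cnt s σ + cnt s ρ :=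
  Multiset.countP_add _ _ _

lemma cnt_replicate (s n x : ℕ) :
    cnt s (Multiset.replicate n x) = if s ≤ x then n else 0 := by
  induction n with
  | zero => simp [cnt]
  | succ n ih => rw [Multiset.replicate_succ, cnt_cons, ih]; split <;> omega

lemma cnt_erase {k : ℕ} {τ : Multiset ℕ} (h : k ∈ τ) (s : ℕ) :
    cnt s (τ.erase k) + (if s ≤ k then 1 else 0) = cnt s τ := by
  conv_rhs => rw [← Multiset.cons_erase h]
  rw [cnt_cons]

lemma exists_of_cnt_pos {s : ℕ} {τ : Multiset ℕ} (h : 0 < cnt s τ) :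
    ∃ x ∈ τ, s ≤ x := by
  simpa [cnt] using Multiset.countP_pos.mp h

lemma mem_of_gap {k : ℕ} {τ : Multiset ℕ} (h : cnt (k + 1) τ < cnt k τ) : k ∈ τ := by
  have := cnt_split k τ
  have : 0 < τ.count k := by omega
  exact Multiset.count_pos.mp this

lemma cnt_tkt (f : ℕ → ℕ) (τ : Multiset ℕ) (k t s : ℕ) :
    cnt s (tkt f τ k t) = cnt s (τ.erase k) + (if s ≤ k - 1 then k * (f t - 1) else 0) := by
  rw [tkt, cnt_add, cnt_replicate]


lemma key_step (f : ℕ → ℕ) (τ τ' : Multiset ℕ) (k t : ℕ) (hk : k ∈ τ)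
    (hd : ∀ s, cnt s τ ≤ cnt s τ') :
    ∃ k' ∈ τ', k ≤ k' ∧ ∀ s, cnt s (tkt f τ k t) ≤ cnt s (tkt f τ' k' t) := by
  set r := cnt k τ with hr
  have hr1 : 1 ≤ r := by
    have : 0 < cnt k τ := by
      rw [cnt_split]
      have := Multiset.count_pos.mpr hk
      omega
    omega
  set b := τ'.sum with hb
  -- all elements of τ' are ≤ b
  have hle_sum : ∀ x ∈ τ', x ≤ b := fun x hx =>
    Multiset.single_le_sum (fun y _ => Nat.zero_le y) x hx
  have hPk : r ≤ cnt k τ' := hd k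
  have hkb : k ≤ b := by
    obtain ⟨y, hy, hky⟩ := exists_of_cnt_pos (show 0 < cnt k τ' by omega)
    exact le_trans hky (hle_sum y hy)
  set k' := Nat.findGreatest (fun x => r ≤ cnt x τ') b with hk'def
  have hk'P : r ≤ cnt k' τ' := Nat.findGreatest_spec (P := fun x => r ≤ cnt x τ') hkb hPk
  have hkk' : k ≤ k' := Nat.le_findGreatest hkb hPk
  have hk'b : k' ≤ b := Nat.findGreatest_le b
  have hsucc : cnt (k' + 1) τ' < r := by
    by_cases h : k' + 1 ≤ b
    · have := Nat.findGreatest_is_greatest (P := fun x => r ≤ cnt x τ') (Nat.lt_succ_self k') h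
      simp only [Nat.succ_eq_add_one] at this
      omega
    · have : cnt (k' + 1) τ' = 0 := by
        by_contra hpos
        obtain ⟨y, hy, hky⟩ := exists_of_cnt_pos (Nat.pos_of_ne_zero hpos)
        have := hle_sum y hy
        omega
      omega
  have hk'mem : k' ∈ τ' := mem_of_gap (by omega)
  refine ⟨k', hk'mem, hkk', fun s => ?_⟩
  rw [cnt_tkt, cnt_tkt]
  have hA := cnt_erase hk s
  have hA' := cnt_erase hk'mem s
  have hds := hd s
  have hcc' : k * (f t - 1) ≤ k' * (f t - 1) := Nat.mul_le_mul_right _ hkk'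
  by_cases h1 : s ≤ k
  · -- s ≤ k ≤ k'
    have h2 : s ≤ k' := le_trans h1 hkk'
    by_cases h3 : s ≤ k - 1
    · have h4 : s ≤ k' - 1 := by omega
      simp only [if_pos h1, if_pos h2] at hA hA'
      rw [if_pos h3, if_pos h4]
      omega
    · simp only [if_pos h1, if_pos h2] at hA hA'
      rw [if_neg h3]
      split_ifs <;> omega
  · -- k < s
    have h3 : ¬ s ≤ k - 1 := by omega
    rw [if_neg h3]
    simp only [if_neg h1] at hA
    -- cnt s τ < r since s ≥ k+1
    have hlt : cnt s τ < r := by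
      have h5 : cnt s τ ≤ cnt (k + 1) τ := cnt_anti (by omega) τ
      have h6 : cnt (k + 1) τ < r := by
        rw [hr, cnt_split k τ]
        have := Multiset.count_pos.mpr hk
        omega
      omega
    by_cases h4 : s ≤ k' - 1
    · have h7 : s ≤ k' := by omega
      have h8 : cnt k' τ' ≤ cnt s τ' := cnt_anti h7 τ'
      simp only [if_pos h7] at hA'
      rw [if_pos h4]
      omega
    · rw [if_neg h4]
      by_cases h7 : s ≤ k'
      · have h8 : cnt k' τ' ≤ cnt s τ' := cnt_anti h7 τ'
        simp only [if_pos h7] at hA'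
        omega
      · simp only [if_neg h7] at hA'
        omega

-- In an ascending sorted list, entries with index ≥ length - countP(s ≤ ·) are ≥ s.
lemma sorted_top (l : List ℕ) (hl : l.Pairwise (· ≤ ·)) (s j : ℕ)
    (hj : l.length - l.countP (fun x => s ≤ x) ≤ j) (hj2 : j < l.length) :
    s ≤ l.getD j 0 := by
  by_contra hcon
  push_neg at hcon
  rw [List.getD_eq_getElem l 0 hj2] at hcon
  have hp := List.pairwise_iff_getElem.mp hl
  have hsplit : l.countP (fun x => s ≤ x) =
      (l.take (j+1)).countP (fun x => s ≤ x) + (l.drop (j+1)).countP (fun x => s ≤ x) := by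
    conv_lhs => rw [← List.take_append_drop (j+1) l]
    rw [List.countP_append]
  have htake : (l.take (j+1)).countP (fun x => s ≤ x) = 0 := by
    rw [List.countP_eq_zero]
    intro a ha
    obtain ⟨i, hi, hia⟩ := List.mem_iff_getElem.mp ha
    rw [List.getElem_take] at hia
    have hij : i < j + 1 := lt_of_lt_of_le hi (by simp)
    have : l[i] ≤ l[j] := by
      rcases Nat.lt_or_ge i j with h | h
      · exact hp i j (by omega) hj2 h
      · have : i = j := by omega
        subst this; exact le_refl _
    simp only [decide_eq_true_eq]
    omega
  have hdrop : (l.drop (j+1)).countP (fun x => s ≤ x) ≤ l.length - (j+1) := by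
    calc (l.drop (j+1)).countP (fun x => s ≤ x) ≤ (l.drop (j+1)).length :=
          List.countP_le_length
      _ = l.length - (j+1) := List.length_drop
  omega

-- In an ascending sorted list, entries with index < length - countP(s ≤ ·) are < s.
lemma sorted_bot (l : List ℕ) (hl : l.Pairwise (· ≤ ·)) (s j : ℕ)
    (hj : j < l.length - l.countP (fun x => s ≤ x)) :
    l.getD j 0 < s := by
  have hj2 : j < l.length := by
    have := List.countP_le_length (p := fun x => decide (s ≤ x)) (l := l)
    omega
  by_contra hcon
  push_neg at hcon
  rw [List.getD_eq_getElem l 0 hj2] at hcon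
  have hp := List.pairwise_iff_getElem.mp hl
  have hdrop : (l.drop j).countP (fun x => s ≤ x) = (l.drop j).length := by
    rw [List.countP_eq_length]
    intro a ha
    obtain ⟨i, hi, hia⟩ := List.mem_iff_getElem.mp ha
    have hi2 : i < l.length - j := by simpa using hi
    have hji : j + i < l.length := by omega
    have hia2 : l[j + i]'hji = a := Eq.trans (List.getElem_drop (xs := l) (h := hi)).symm hia
    have : l[j] ≤ l[j + i]'hji := by
      rcases Nat.eq_zero_or_pos i with h | h
      · subst h; simp
      · exact hp j (j + i) hj2 hji (by omega)
    simp only [decide_eq_true_eq]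
    omega
  have hsplit : l.countP (fun x => s ≤ x) =
      (l.take j).countP (fun x => s ≤ x) + (l.drop j).countP (fun x => s ≤ x) := by
    conv_lhs => rw [← List.take_append_drop j l]
    rw [List.countP_append]
  rw [List.length_drop] at hdrop
  omega

lemma cnt_eq_countP_sort (s : ℕ) (τ : Multiset ℕ) :
    cnt s τ = (τ.sort (· ≤ ·)).countP (fun x => s ≤ x) := by
  rw [cnt]
  conv_lhs => rw [← Multiset.sort_eq τ (· ≤ ·)]
  exact Multiset.coe_countP _ _

lemma dom_cnt {τ τ' : Multiset ℕ} (h : Dom τ τ') : ∀ s, cnt s τ ≤ cnt s τ' := by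
  intro s
  by_contra hcon
  push_neg at hcon
  set l := τ.sort (· ≤ ·) with hl
  set l' := τ'.sort (· ≤ ·) with hl'
  have hsort : l.Pairwise (· ≤ ·) := Multiset.pairwise_sort _ _
  have hsort' : l'.Pairwise (· ≤ ·) := Multiset.pairwise_sort _ _
  have hlen : l.length = Multiset.card τ := Multiset.length_sort _
  have hlen' : l'.length = Multiset.card τ' := Multiset.length_sort _
  set r := cnt s τ with hr
  have hrl : r = l.countP (fun x => s ≤ x) := cnt_eq_countP_sort s τ
  have hrl' : cnt s τ' = l'.countP (fun x => s ≤ x) := cnt_eq_countP_sort s τ'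
  have hrn : r ≤ l.length := hrl ▸ List.countP_le_length
  have hr1 : 1 ≤ r := by omega
  have hnm : Multiset.card τ ≤ Multiset.card τ' := h.1
  -- index r-1 from the top
  have hi : r - 1 < Multiset.card τ := by omega
  have hab := h.2 (r - 1) hi
  have hidx : Multiset.card τ - 1 - (r - 1) = Multiset.card τ - r := by omega
  have hidx' : Multiset.card τ' - 1 - (r - 1) = Multiset.card τ' - r := by omega
  rw [hidx, hidx'] at hab
  have ha : s ≤ l.getD (Multiset.card τ - r) 0 := by
    apply sorted_top l hsort
    · omega
    · omega
  have hb : l'.getD (Multiset.card τ' - r) 0 < s := by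
    apply sorted_bot l' hsort'
    rw [← hrl']
    omega
  rw [← hl, ← hl'] at hab
  omega

lemma M_main (f : ℕ → ℕ) (M : Multiset ℕ → ℕ → ℕ)
    (hM0 : ∀ t, M 0 t = 0)
    (hMrec : ∀ τ : Multiset ℕ, τ ≠ 0 → ∀ t,
      M τ t = τ.toFinset.sup (fun k => 1 + M (tkt f τ k t) (t + 1))) :
    ∀ v : ℕ, ∀ τ' τ : Multiset ℕ, ∀ t : ℕ, M τ' t = v →
      (∀ s, cnt s τ ≤ cnt s τ') → M τ t ≤ v := by
  intro v
  induction v using Nat.strong_induction_on with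
  | _ v ih =>
    intro τ' τ t hv hd
    by_cases hτ : τ = 0
    · subst hτ; rw [hM0]; exact Nat.zero_le v
    · have hτ' : τ' ≠ 0 := by
        intro h0; subst h0
        have h1 := hd 0
        rw [cnt_zero, cnt_zero] at h1
        simp only [Multiset.card_zero, Nat.le_zero] at h1
        exact hτ (Multiset.card_eq_zero.mp h1)
      rw [hMrec τ hτ t]
      apply Finset.sup_le
      intro k hkfin
      have hk : k ∈ τ := Multiset.mem_toFinset.mp hkfin
      obtain ⟨k', hk'mem, hkk', hd'⟩ := key_step f τ τ' k t hk hd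
      have hle : 1 + M (tkt f τ' k' t) (t + 1) ≤ M τ' t := by
        rw [hMrec τ' hτ' t]
        exact Finset.le_sup (f := fun k => 1 + M (tkt f τ' k t) (t + 1)) (Multiset.mem_toFinset.mpr hk'mem)
      have hlt : M (tkt f τ' k' t) (t + 1) < v := by omega
      have := ih _ hlt (tkt f τ' k' t) (tkt f τ k t) (t + 1) rfl hd'
      omega

/-- Monotonicity of M w.r.t. dominance: if τ ⊑ τ' then M_τ(t) ≤ M_{τ'}(t),
where M is defined by M_∅(t) = 0 and M_τ(t) = max_{k∈τ}(1 + M_{τ⟨k,t⟩}(t+1)). -/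
theorem M_monotone_dominance (f : ℕ → ℕ) (hmono : Monotone f) (hf0 : 0 < f 0)
    (M : Multiset ℕ → ℕ → ℕ)
    (hM0 : ∀ t, M 0 t = 0)
    (hMrec : ∀ τ : Multiset ℕ, τ ≠ 0 → ∀ t,
      M τ t = τ.toFinset.sup (fun k => 1 + M (tkt f τ k t) (t + 1)))
    (τ τ' : Multiset ℕ) (hdom : Dom τ τ') :
    ∀ t : ℕ, M τ t ≤ M τ' t := fun t =>
  M_main f M hM0 hMrec (M τ' t) τ' τ t rfl (dom_cnt hdom)
end

section
/- Additivity of M over sums: if τ = ∅ or every element of τ' is ≤ min τ (precisely, τ' ≤_m {min τ} in the multiset order), then M_{τ+τ'}(t) = M_{τ'}(t) + M_τ(t + M_{τ'}(t)) for all t. -/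
/-- The (strict) multiset ordering on finite multisets of naturals. -/
inductive MLt : Multiset ℕ → Multiset ℕ → Prop
  | single (τ : Multiset ℕ) (k : ℕ) : (∀ l ∈ τ, l < k) → MLt τ {k}
  | add (τ₁ τ₂ τ : Multiset ℕ) : MLt τ₁ τ₂ → MLt (τ₁ + τ) (τ₂ + τ)
  | trans (τ₁ τ₂ τ₃ : Multiset ℕ) : MLt τ₁ τ₂ → MLt τ₂ τ₃ → MLt τ₁ τ₃

lemma mlt_ne_zero {σ ρ : Multiset ℕ} (h : MLt σ ρ) : ρ ≠ 0 := by
  induction h with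
  | single τ k _ => simp
  | add τ₁ τ₂ τ _ ih =>
      intro h0
      apply ih
      have := congrArg Multiset.card h0
      rw [Multiset.card_add, Multiset.card_zero] at this
      exact Multiset.card_eq_zero.1 (by omega)
  | trans τ₁ τ₂ τ₃ _ _ _ ih => exact ih

lemma mlt_le {σ ρ : Multiset ℕ} (h : MLt σ ρ) : ∀ x ∈ σ, ∃ y ∈ ρ, x ≤ y := by
  induction h with
  | single τ k hlt =>
      intro x hx
      exact ⟨k, Multiset.mem_singleton_self k, (hlt x hx).le⟩
  | add τ₁ τ₂ τ _ ih =>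
      intro x hx
      rcases Multiset.mem_add.1 hx with hx | hx
      · obtain ⟨y, hy, hxy⟩ := ih x hx
        exact ⟨y, Multiset.mem_add.2 (Or.inl hy), hxy⟩
      · exact ⟨x, Multiset.mem_add.2 (Or.inr hx), le_rfl⟩
  | trans τ₁ τ₂ τ₃ _ _ ih₁ ih₂ =>
      intro x hx
      obtain ⟨y, hy, hxy⟩ := ih₁ x hx
      obtain ⟨z, hz, hyz⟩ := ih₂ y hy
      exact ⟨z, hz, hxy.trans hyz⟩

lemma mlt_singleton {σ : Multiset ℕ} {k : ℕ} (h : MLt σ {k}) :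
    ∀ x ∈ σ, x < k := by
  suffices H : ∀ ρ, MLt σ ρ → ∀ k, ρ = {k} → ∀ x ∈ σ, x < k from
    fun x hx => H {k} h k rfl x hx
  clear h
  intro ρ h
  induction h with
  | single τ k' hlt =>
      intro k hk x hx
      have : k' = k := by simpa using hk
      exact this ▸ hlt x hx
  | add τ₁ τ₂ τ h ih =>
      intro k hk x hx
      have hτ₂ : τ₂ ≠ 0 := mlt_ne_zero h
      have hcard : Multiset.card τ₂ + Multiset.card τ = 1 := by
        have := congrArg Multiset.card hk
        simpa using this
      have h1 : 1 ≤ Multiset.card τ₂ := by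
        rcases Nat.pos_of_ne_zero (fun h0 => hτ₂ (Multiset.card_eq_zero.1 h0)) with h'
        exact h'
      have hτ0 : Multiset.card τ = 0 := by omega
      have hτ0' : τ = 0 := Multiset.card_eq_zero.1 hτ0
      subst hτ0'
      rw [add_zero] at hk hx
      exact ih k hk x hx
  | trans τ₁ τ₂ τ₃ h₁ h₂ ih₁ ih₂ =>
      intro k hk x hx
      obtain ⟨y, hy, hxy⟩ := mlt_le h₁ x hx
      exact lt_of_le_of_lt hxy (ih₂ k hk y hy)

lemma exists_min (s : Multiset ℕ) (h : s ≠ 0) : ∃ m ∈ s, ∀ l ∈ s, m ≤ l := by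
  induction s using Multiset.induction_on with
  | empty => exact absurd rfl h
  | cons a s ih =>
      by_cases hs : s = 0
      · subst hs
        exact ⟨a, Multiset.mem_cons_self a 0, by simp⟩
      · obtain ⟨m, hm, hmin⟩ := ih hs
        refine ⟨min a m, ?_, ?_⟩
        · rcases le_total a m with hle | hle
          · simpa [min_eq_left hle] using Multiset.mem_cons_self a s
          · simp [min_eq_right hle, Multiset.mem_cons.2 (Or.inr hm)]
        · intro l hl
          rcases Multiset.mem_cons.1 hl with rfl | hl
          · exact min_le_left _ _
          · exact le_trans (min_le_right _ _) (hmin l hl)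

/-- Additivity of M over sums: if τ = ∅ or τ' ≤_m {min τ} in the multiset
ordering, then M_{τ+τ'}(t) = M_{τ'}(t) + M_τ(t + M_{τ'}(t)) for all t, where M
is defined by M_∅(t) = 0 and M_τ(t) = 1 + M_{τ⟨min τ,t⟩}(t+1) for τ ≠ ∅. -/
theorem M_additivity (f : ℕ → ℕ) (hmono : Monotone f) (hf0 : 0 < f 0)
    (M : Multiset ℕ → ℕ → ℕ)
    (hM0 : ∀ t, M 0 t = 0)
    (hMrec : ∀ τ : Multiset ℕ, τ ≠ 0 → ∀ t, ∀ k : ℕ,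
      (k ∈ τ ∧ ∀ l ∈ τ, k ≤ l) → M τ t = 1 + M (tkt f τ k t) (t + 1))
    (τ τ' : Multiset ℕ)
    (hside : τ = 0 ∨ ∃ k : ℕ, (k ∈ τ ∧ ∀ l ∈ τ, k ≤ l) ∧
      (MLt τ' {k} ∨ τ' = {k})) :
    ∀ t : ℕ, M (τ + τ') t = M τ' t + M τ (t + M τ' t) := by
  rcases hside with rfl | ⟨k, ⟨hkmem, hkmin⟩, hk'⟩
  · intro t
    rw [zero_add, hM0, add_zero]
  · -- key: all elements of τ' are ≤ k
    have hbound : ∀ l ∈ τ', l ≤ k := by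
      rcases hk' with h | rfl
      · exact fun l hl => (mlt_singleton h l hl).le
      · intro l hl
        exact le_of_eq (by simpa using hl)
    clear hk'
    -- strong induction on M τ' t
    have key : ∀ n : ℕ, ∀ (σ : Multiset ℕ) (t : ℕ), M σ t = n →
        (∀ l ∈ σ, l ≤ k) →
        M (τ + σ) t = M σ t + M τ (t + M σ t) := by
      intro n
      induction n using Nat.strong_induction_on with
      | _ n ih =>
        intro σ t hn hσ
        by_cases hσ0 : σ = 0
        · subst hσ0
          rw [add_zero, hM0, zero_add, add_zero]
        · obtain ⟨m, hm, hmmin⟩ := exists_min σ hσ0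
          have hmk : m ≤ k := hσ m hm
          have hτσ0 : τ + σ ≠ 0 := by
            intro h0
            apply hσ0
            have := congrArg Multiset.card h0
            rw [Multiset.card_add, Multiset.card_zero] at this
            exact Multiset.card_eq_zero.1 (by omega)
          have hmminsum : (m ∈ τ + σ ∧ ∀ l ∈ τ + σ, m ≤ l) := by
            refine ⟨Multiset.mem_add.2 (Or.inr hm), ?_⟩
            intro l hl
            rcases Multiset.mem_add.1 hl with hl | hl
            · exact hmk.trans (hkmin l hl)
            · exact hmmin l hl
          have hstep : M σ t = 1 + M (tkt f σ m t) (t + 1) :=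
            hMrec σ hσ0 t m ⟨hm, hmmin⟩
          have hsum_step : M (τ + σ) t = 1 + M (τ + tkt f σ m t) (t + 1) := by
            have h1 : tkt f (τ + σ) m t = τ + tkt f σ m t := by
              unfold tkt
              rw [Multiset.erase_add_right_pos τ hm, add_assoc]
            rw [hMrec (τ + σ) hτσ0 t m hmminsum, h1]
          -- the new multiset still has all elements ≤ k
          have hσ' : ∀ l ∈ tkt f σ m t, l ≤ k := by
            intro l hl
            unfold tkt at hl
            rcases Multiset.mem_add.1 hl with hl | hl
            · exact hσ l (Multiset.mem_of_mem_erase hl)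
            · have := Multiset.eq_of_mem_replicate hl
              omega
          have hlt : M (tkt f σ m t) (t + 1) < n := by omega
          have ihres := ih _ hlt (tkt f σ m t) (t + 1) rfl hσ'
          rw [hsum_step, ihres, hstep]
          have harg : t + (1 + M (tkt f σ m t) (t + 1)) = t + 1 + M (tkt f σ m t) (t + 1) := by omega
          rw [harg]
          ring
    intro t
    exact key (M τ' t) τ' t rfl hbound
end
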